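/- arXiv:1301.7737 — 7 statements merged into one kernel-verified Lean document; each statement's English description precedes it below -/
import Mathlib

section
/- Let n ≥ 2 be an integer, m > 0 a real number, λ a real number, and let f : {(x,t) ∈ ℝⁿ × ℝ : xₙ > 0} → ℝ be a smooth function satisfying the quasi-Einstein PDE system for (f, m, λ). Then λ = −(n−1), and there exists a constant c ∈ ℝ such that either f(x,t) = ε·√((n−1)m)·t + c for some ε ∈ {−1, +1} (and f is independent of x), or there exists a constant a ∈ ℝ with f(x,t) = −m·ln(cosh(√((n−1)/m)·t + a)) + c (and f is independent of x). -/
open Real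

/-- The index of the last coordinate `xₙ` in `Fin n`. -/
def lastIdx (n : ℕ) (hn : 2 ≤ n) : Fin n := ⟨n - 1, by omega⟩

/-- Partial derivative of `f` in the `i`-th space coordinate at the point `p = (x, t)`. -/
noncomputable def partialX (n : ℕ) (f : (Fin n → ℝ) × ℝ → ℝ) (i : Fin n)
    (p : (Fin n → ℝ) × ℝ) : ℝ :=
  deriv (fun s => f (Function.update p.1 i s, p.2)) (p.1 i)

/-- Partial derivative of `f` in the `t` coordinate at the point `p = (x, t)`. -/
noncomputable def partialT (n : ℕ) (f : (Fin n → ℝ) × ℝ → ℝ)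
    (p : (Fin n → ℝ) × ℝ) : ℝ :=
  deriv (fun s => f (p.1, s)) p.2

/-- The quasi-Einstein PDE system for `(f, m, λ)` on the half-space model
`{(x,t) ∈ ℝⁿ × ℝ : xₙ > 0}` of `ℍⁿ × ℝ` with metric `g = xₙ⁻²·Σᵢ dxᵢ² + dt²`. -/
def QESystem (n : ℕ) (hn : 2 ≤ n) (m lam : ℝ) (f : (Fin n → ℝ) × ℝ → ℝ) : Prop :=
  ∀ p : (Fin n → ℝ) × ℝ, 0 < p.1 (lastIdx n hn) →
    -- (1)  xₙ²·∂²f/∂xᵢ² − xₙ·∂f/∂xₙ = (xₙ²/m)·(∂f/∂xᵢ)² + λ + (n−1),  i < n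
    (∀ i : Fin n, (i : ℕ) < n - 1 →
      (p.1 (lastIdx n hn)) ^ 2 * partialX n (partialX n f i) i p
        - p.1 (lastIdx n hn) * partialX n f (lastIdx n hn) p
      = (p.1 (lastIdx n hn)) ^ 2 / m * (partialX n f i p) ^ 2 + lam + ((n : ℝ) - 1)) ∧
    -- (2)  xₙ·∂f/∂xₙ + xₙ²·∂²f/∂xₙ² = (xₙ²/m)·(∂f/∂xₙ)² + λ + (n−1)
    (p.1 (lastIdx n hn) * partialX n f (lastIdx n hn) p
        + (p.1 (lastIdx n hn)) ^ 2 * partialX n (partialX n f (lastIdx n hn)) (lastIdx n hn) p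
      = (p.1 (lastIdx n hn)) ^ 2 / m * (partialX n f (lastIdx n hn) p) ^ 2
        + lam + ((n : ℝ) - 1)) ∧
    -- (3)  ∂²f/∂t² = (1/m)·(∂f/∂t)² + λ
    (partialT n (partialT n f) p = (1 / m) * (partialT n f p) ^ 2 + lam) ∧
    -- (4)  ∂²f/∂xᵢ∂xⱼ = (1/m)·(∂f/∂xᵢ)·(∂f/∂xⱼ),  i < j < n
    (∀ i j : Fin n, (i : ℕ) < (j : ℕ) → (j : ℕ) < n - 1 →
      partialX n (partialX n f j) i p = (1 / m) * partialX n f i p * partialX n f j p) ∧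
    -- (5)  xₙ²·∂²f/∂xᵢ∂xₙ + xₙ·∂f/∂xᵢ = (xₙ²/m)·(∂f/∂xᵢ)·(∂f/∂xₙ),  i < n
    (∀ i : Fin n, (i : ℕ) < n - 1 →
      (p.1 (lastIdx n hn)) ^ 2 * partialX n (partialX n f (lastIdx n hn)) i p
          + p.1 (lastIdx n hn) * partialX n f i p
        = (p.1 (lastIdx n hn)) ^ 2 / m * partialX n f i p * partialX n f (lastIdx n hn) p) ∧
    -- (6)  ∂²f/∂xᵢ∂t = (1/m)·(∂f/∂xᵢ)·(∂f/∂t),  i ≤ n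
    (∀ i : Fin n,
      partialX n (partialT n f) i p = (1 / m) * partialX n f i p * partialT n f p)


/-- No positive global solution of `χ'' = -c χ` with `c > 0` (Wronskian with sine). -/
lemma no_pos_osc {c : ℝ} (hc : 0 < c) {χ χd : ℝ → ℝ}
    (h1 : ∀ r, HasDerivAt χ (χd r) r)
    (h2 : ∀ r, HasDerivAt χd (-(c * χ r)) r)
    (hpos : ∀ r, 0 < χ r) : False := by
  set k := Real.sqrt c with hk
  have hk0 : 0 < k := Real.sqrt_pos.2 hc
  have hk2 : k ^ 2 = c := Real.sq_sqrt hc.le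
  set W : ℝ → ℝ := fun r => χd r * Real.sin (k * r) - χ r * (k * Real.cos (k * r)) with hW
  have hsin : ∀ r : ℝ, HasDerivAt (fun r => Real.sin (k * r)) (Real.cos (k * r) * k) r := by
    intro r
    exact (Real.hasDerivAt_sin (k * r)).comp r (by simpa using (hasDerivAt_id r).const_mul k)
  have hcos : ∀ r : ℝ, HasDerivAt (fun r => k * Real.cos (k * r)) (k * (-Real.sin (k * r) * k)) r := by
    intro r
    exact ((Real.hasDerivAt_cos (k * r)).comp r
      (by simpa using (hasDerivAt_id r).const_mul k)).const_mul k
  have hW' : ∀ r, HasDerivAt W 0 r := by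
    intro r
    have h := (((h2 r).mul (hsin r))).sub ((h1 r).mul (hcos r))
    have heq : -(c * χ r) * Real.sin (k * r) + χd r * (Real.cos (k * r) * k) -
        (χd r * (k * Real.cos (k * r)) + χ r * (k * (-Real.sin (k * r) * k))) = 0 := by
      have hkk : k * k = c := by nlinarith [hk2]
      linear_combination (χ r * Real.sin (k * r)) * hkk
    rwa [heq] at h
  have hWconst : W 0 = W (Real.pi / k) :=
    is_const_of_deriv_eq_zero (fun r => (hW' r).differentiableAt) (fun r => (hW' r).deriv) _ _
  have h0 : W 0 = -(k * χ 0) := by simp [hW]; ring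
  have hπ : W (Real.pi / k) = k * χ (Real.pi / k) := by
    have hkπ : k * (Real.pi / k) = Real.pi := by field_simp
    simp [hW, hkπ, Real.sin_pi, Real.cos_pi]; ring
  have := hpos 0
  have := hpos (Real.pi / k)
  rw [h0, hπ] at hWconst
  nlinarith

/-- Explicit solution of `U'' = k² U`. -/
lemma ode_sol {k : ℝ} (hk : 0 < k) {U Ud : ℝ → ℝ}
    (h1 : ∀ t, HasDerivAt U (Ud t) t)
    (h2 : ∀ t, HasDerivAt Ud (k ^ 2 * U t) t) :
    ∀ t, U t = (U 0 + Ud 0 / k) / 2 * Real.exp (k * t)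
        + (U 0 - Ud 0 / k) / 2 * Real.exp (-(k * t)) := by
  set A := (U 0 + Ud 0 / k) / 2 with hA
  set B := (U 0 - Ud 0 / k) / 2 with hB
  set V : ℝ → ℝ := fun t => U t - A * Real.exp (k * t) - B * Real.exp (-(k * t)) with hV
  set Vd : ℝ → ℝ := fun t => Ud t - A * k * Real.exp (k * t) + B * k * Real.exp (-(k * t)) with hVd
  have hekt : ∀ t : ℝ, HasDerivAt (fun t => Real.exp (k * t)) (Real.exp (k * t) * k) t := by
    intro t
    exact (Real.hasDerivAt_exp (k * t)).comp t (by simpa using (hasDerivAt_id t).const_mul k)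
  have hekt' : ∀ t : ℝ, HasDerivAt (fun t => Real.exp (-(k * t))) (Real.exp (-(k * t)) * (-k)) t := by
    intro t
    have := (Real.hasDerivAt_exp (-(k * t))).comp t
      (by simpa using ((hasDerivAt_id t).const_mul k).neg)
    exact this
  have hV1 : ∀ t, HasDerivAt V (Vd t) t := by
    intro t
    have h := ((h1 t).sub ((hekt t).const_mul A)).sub ((hekt' t).const_mul B)
    have : Ud t - A * (Real.exp (k * t) * k) - B * (Real.exp (-(k * t)) * (-k)) = Vd t := by
      simp [hVd]; ring
    rwa [this] at h
  have hV2 : ∀ t, HasDerivAt Vd (k ^ 2 * V t) t := by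
    intro t
    have h := (((h2 t).sub ((hekt t).const_mul (A * k)))).add ((hekt' t).const_mul (B * k))
    have : k ^ 2 * U t - A * k * (Real.exp (k * t) * k) + B * k * (Real.exp (-(k * t)) * (-k))
        = k ^ 2 * V t := by simp [hV]; ring
    rwa [this] at h
  have hV0 : V 0 = 0 := by simp [hV, hA, hB]; ring
  have hVd0 : Vd 0 = 0 := by
    simp [hVd, hA, hB]
    field_simp
    ring
  -- P := exp(-kt) (Vd + k V) is constant, equal to 0
  set P : ℝ → ℝ := fun t => Real.exp (-(k * t)) * (Vd t + k * V t) with hP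
  have hP' : ∀ t, HasDerivAt P 0 t := by
    intro t
    have h := (hekt' t).mul ((hV2 t).add ((hV1 t).const_mul k))
    have : Real.exp (-(k * t)) * (-k) * (Vd t + k * V t)
        + Real.exp (-(k * t)) * (k ^ 2 * V t + k * Vd t) = 0 := by ring
    have h' : HasDerivAt P (Real.exp (-(k * t)) * (-k) * (Vd t + k * V t)
        + Real.exp (-(k * t)) * (k ^ 2 * V t + k * Vd t)) t := h
    rwa [this] at h'
  have hP0 : ∀ t, P t = 0 := by
    intro t
    have := is_const_of_deriv_eq_zero (fun r => (hP' r).differentiableAt)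
      (fun r => (hP' r).deriv) t 0
    rw [this]
    simp [hP, hV0, hVd0]
  have hVdeq : ∀ t, Vd t = -(k * V t) := by
    intro t
    have := hP0 t
    have he : Real.exp (-(k * t)) ≠ 0 := (Real.exp_pos _).ne'
    rw [hP] at this
    simp only [mul_eq_zero] at this
    rcases this with h | h
    · exact absurd h he
    · linarith
  set Q : ℝ → ℝ := fun t => Real.exp (k * t) * V t with hQ
  have hQ' : ∀ t, HasDerivAt Q 0 t := by
    intro t
    have h := (hekt t).mul (hV1 t)
    have : Real.exp (k * t) * k * V t + Real.exp (k * t) * Vd t = 0 := by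
      rw [hVdeq t]; ring
    rwa [this] at h
  intro t
  have hQt : Q t = Q 0 :=
    is_const_of_deriv_eq_zero (fun r => (hQ' r).differentiableAt) (fun r => (hQ' r).deriv) t 0
  have : Q 0 = 0 := by simp [hQ, hV0]
  rw [this] at hQt
  have he : Real.exp (k * t) ≠ 0 := (Real.exp_pos _).ne'
  have hVt : V t = 0 := by
    rcases mul_eq_zero.1 hQt with h | h
    · exact absurd h he
    · exact h
  have := hVt
  simp only [hV] at this
  linarith

/-- positivity of coefficients -/
lemma pos_coeff_left {k A B : ℝ} (hk : 0 < k)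
    (h : ∀ t, 0 < A * Real.exp (k * t) + B * Real.exp (-(k * t))) : 0 ≤ A := by
  by_contra hA
  push_neg at hA
  set M : ℝ := max 1 ((|B| + 1) / (-A)) with hM
  have hM1 : 1 ≤ M := le_max_left _ _
  have hM0 : 0 < M := lt_of_lt_of_le one_pos hM1
  set t : ℝ := (1 / k) * Real.log M with ht
  have hkt : k * t = Real.log M := by rw [ht]; field_simp
  have hekt : Real.exp (k * t) = M := by rw [hkt, Real.exp_log hM0]
  have htpos : 0 ≤ t := by
    rw [ht]
    have : 0 ≤ Real.log M := Real.log_nonneg hM1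
    positivity
  have h1 : A * Real.exp (k * t) ≤ -(|B| + 1) := by
    rw [hekt]
    have hle : (|B| + 1) / (-A) ≤ M := le_max_right _ _
    have : (|B| + 1) ≤ M * (-A) := by
      rw [div_le_iff₀ (by linarith)] at hle
      linarith [hle]
    nlinarith
  have h2 : B * Real.exp (-(k * t)) ≤ |B| := by
    have he1 : Real.exp (-(k * t)) ≤ 1 := by
      rw [Real.exp_le_one_iff]
      have : 0 ≤ k * t := by positivity
      linarith
    have he0 : 0 < Real.exp (-(k * t)) := Real.exp_pos _
    calc B * Real.exp (-(k * t)) ≤ |B| * Real.exp (-(k * t)) := by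
          apply mul_le_mul_of_nonneg_right (le_abs_self B) he0.le
      _ ≤ |B| * 1 := by apply mul_le_mul_of_nonneg_left he1 (abs_nonneg B)
      _ = |B| := mul_one _
  have := h t
  linarith

lemma pos_coeffs {k A B : ℝ} (hk : 0 < k)
    (h : ∀ t, 0 < A * Real.exp (k * t) + B * Real.exp (-(k * t))) : 0 ≤ A ∧ 0 ≤ B := by
  constructor
  · exact pos_coeff_left hk h
  · apply pos_coeff_left hk (B := A)
    intro t
    have := h (-t)
    have h1 : k * -t = -(k * t) := by ring
    rw [h1] at this
    simp only [neg_neg] at this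
    linarith

/-- `deriv` of a `C^∞` function has a derivative. -/
lemma hasDerivAt_deriv_of_contDiffAt {φ : ℝ → ℝ} {s : ℝ} (h : ContDiffAt ℝ (⊤ : ℕ∞) φ s) :
    HasDerivAt (deriv φ) (deriv (deriv φ) s) s := by
  have h2 : ContDiffAt ℝ (⊤ : ℕ∞) (fderiv ℝ φ) s := h.fderiv_right (by simp)
  have h3 : ContDiffAt ℝ (⊤ : ℕ∞) (fun x => fderiv ℝ φ x 1) s := h2.clm_apply contDiffAt_const
  have h1 : ContDiffAt ℝ (⊤ : ℕ∞) (deriv φ) s := by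
    have : (deriv φ) = fun x => fderiv ℝ φ x 1 := by
      funext x; exact (fderiv_apply_one_eq_deriv).symm
    rw [this]; exact h3
  exact ((h1.differentiableAt (by simp)).hasDerivAt)

section Bridges

variable {n : ℕ}

/-- derivative of the coordinate line `s ↦ (update x i s, t)` -/
lemma hasDerivAt_lineX (x : Fin n → ℝ) (i : Fin n) (t s : ℝ) :
    HasDerivAt (fun s' : ℝ => ((Function.update x i s', t) : (Fin n → ℝ) × ℝ))
      ((Pi.single i 1 : Fin n → ℝ), (0 : ℝ)) s := by
  apply HasDerivAt.prodMk
  · rw [hasDerivAt_pi]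
    intro j
    rcases eq_or_ne j i with rfl | hj
    · simp only [Function.update_self, Pi.single_eq_same]
      exact hasDerivAt_id' s
    · simpa [Function.update_of_ne hj, Pi.single_eq_of_ne hj] using hasDerivAt_const s (x j)
  · exact hasDerivAt_const s t

lemma hasDerivAt_lineT (x : Fin n → ℝ) (t : ℝ) :
    HasDerivAt (fun s : ℝ => ((x, s) : (Fin n → ℝ) × ℝ)) (((0 : Fin n → ℝ), (1 : ℝ))) t :=
  (hasDerivAt_const t x).prodMk (hasDerivAt_id t)

lemma contDiff_lineX (x : Fin n → ℝ) (i : Fin n) (t : ℝ) :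
    ContDiff ℝ (⊤ : ℕ∞) (fun s : ℝ => ((Function.update x i s, t) : (Fin n → ℝ) × ℝ)) := by
  apply ContDiff.prodMk
  · rw [contDiff_pi]
    intro j
    rcases eq_or_ne j i with rfl | hj
    · simp only [Function.update_self]
      exact contDiff_id
    · simpa [Function.update_of_ne hj] using contDiff_const (c := x j)
  · exact contDiff_const

lemma contDiff_lineT (x : Fin n → ℝ) :
    ContDiff ℝ (⊤ : ℕ∞) (fun s : ℝ => ((x, s) : (Fin n → ℝ) × ℝ)) :=
  contDiff_const.prodMk contDiff_id

/-- Bridge: derivative along an `x i`-coordinate line in terms of `fderiv`. -/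
lemma bridgeX {g : (Fin n → ℝ) × ℝ → ℝ} {x : Fin n → ℝ} {i : Fin n} {t s : ℝ}
    (hg : DifferentiableAt ℝ g (Function.update x i s, t)) :
    HasDerivAt (fun s' => g (Function.update x i s', t))
      (fderiv ℝ g (Function.update x i s, t) (Pi.single i 1, 0)) s :=
  hg.hasFDerivAt.comp_hasDerivAt s (hasDerivAt_lineX x i t s)

/-- Bridge: derivative along the `t`-coordinate line in terms of `fderiv`. -/
lemma bridgeT {g : (Fin n → ℝ) × ℝ → ℝ} {x : Fin n → ℝ} {t : ℝ}
    (hg : DifferentiableAt ℝ g (x, t)) :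
    HasDerivAt (fun s => g (x, s)) (fderiv ℝ g (x, t) (0, 1)) t :=
  hg.hasFDerivAt.comp_hasDerivAt t (hasDerivAt_lineT x t)

/-- decomposition of a tangent vector `(v, 0)` -/
lemma vec_decomp (v : Fin n → ℝ) :
    ((v, (0 : ℝ)) : (Fin n → ℝ) × ℝ)
      = ∑ i : Fin n, v i • ((Pi.single i 1, 0) : (Fin n → ℝ) × ℝ) := by
  rw [Prod.ext_iff]
  constructor
  · rw [Prod.fst_sum]
    funext j
    rw [Finset.sum_apply]
    simp [Pi.single_apply]
  · rw [Prod.snd_sum]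
    simp

end Bridges
/-- **Uniqueness of quasi-Einstein metrics on `ℍⁿ × ℝ`** (Theorem A).
Any smooth solution of the quasi-Einstein PDE system has `λ = −(n−1)` and is, up to an
additive constant, either `f(x,t) = ±√((n−1)m)·t` or `f(x,t) = −m·ln(cosh(√((n−1)/m)·t + a))`,
independent of `x`. -/
theorem uniqueness_of_quasiEinstein_on_hyperbolic_times_real
    (n : ℕ) (hn : 2 ≤ n) (m lam : ℝ) (hm : 0 < m)
    (f : (Fin n → ℝ) × ℝ → ℝ)
    (hf : ContDiffOn ℝ (⊤ : ℕ∞) f {p : (Fin n → ℝ) × ℝ | 0 < p.1 (lastIdx n hn)})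
    (hqe : QESystem n hn m lam f) :
    lam = -((n : ℝ) - 1) ∧
    ∃ c : ℝ,
      (∃ ε : ℝ, (ε = -1 ∨ ε = 1) ∧
        ∀ p : (Fin n → ℝ) × ℝ, 0 < p.1 (lastIdx n hn) →
          f p = ε * Real.sqrt (((n : ℝ) - 1) * m) * p.2 + c) ∨
      (∃ a : ℝ,
        ∀ p : (Fin n → ℝ) × ℝ, 0 < p.1 (lastIdx n hn) →
          f p = -m * Real.log (Real.cosh (Real.sqrt (((n : ℝ) - 1) / m) * p.2 + a)) + c) := by
  classical
  set l := lastIdx n hn with hldef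
  set D : Set ((Fin n → ℝ) × ℝ) := {p : (Fin n → ℝ) × ℝ | 0 < p.1 l} with hDdef
  have hD : IsOpen D := isOpen_lt continuous_const ((continuous_apply l).comp continuous_fst)
  have hm' : (m : ℝ) ≠ 0 := hm.ne'
  have hfa : ∀ p ∈ D, ContDiffAt ℝ (⊤ : ℕ∞) f p := fun p hp => hf.contDiffAt (hD.mem_nhds hp)
  have hfd : ∀ p ∈ D, DifferentiableAt ℝ f p := fun p hp => (hfa p hp).differentiableAt (by simp)
  -- partials in terms of fderiv
  have hpX : ∀ p ∈ D, ∀ i : Fin n, partialX n f i p = fderiv ℝ f p (Pi.single i 1, 0) := by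
    intro p hp i
    have h := bridgeX (g := f) (x := p.1) (i := i) (t := p.2) (s := p.1 i)
      (by rw [Function.update_eq_self]; exact hfd p hp)
    rw [Function.update_eq_self] at h
    exact h.deriv
  have hpT : ∀ p ∈ D, partialT n f p = fderiv ℝ f p (0, 1) := by
    intro p hp
    exact (bridgeT (g := f) (x := p.1) (t := p.2) (hfd p hp)).deriv
  -- the function b = ∂f/∂t as fderiv, smooth on D
  set b : (Fin n → ℝ) × ℝ → ℝ := fun q => fderiv ℝ f q ((0 : Fin n → ℝ), (1 : ℝ)) with hbdef
  have hb_cd : ∀ p ∈ D, ContDiffAt ℝ (⊤ : ℕ∞) b p := fun p hp =>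
    ((hfa p hp).fderiv_right (by simp)).clm_apply contDiffAt_const
  have hb_d : ∀ p ∈ D, DifferentiableAt ℝ b p := fun p hp =>
    (hb_cd p hp).differentiableAt (by simp)
  -- mixed second derivative identity from equation (6)
  have hqe6 : ∀ p ∈ D, ∀ i : Fin n,
      fderiv ℝ b p (Pi.single i 1, 0) = 1 / m * fderiv ℝ f p (Pi.single i 1, 0) * b p := by
    intro p hp i
    have key := (hqe p hp).2.2.2.2.2 i
    rw [hpX p hp i, hpT p hp] at key
    -- identify partialX (partialT f) i p with fderiv b p (single i 1, 0)
    have hEv : (fun s => partialT n f (Function.update p.1 i s, p.2))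
        =ᶠ[nhds (p.1 i)] (fun s => b (Function.update p.1 i s, p.2)) := by
      have hcont : ContinuousAt (fun s : ℝ => ((Function.update p.1 i s, p.2) : (Fin n → ℝ) × ℝ))
          (p.1 i) := (hasDerivAt_lineX p.1 i p.2 (p.1 i)).continuousAt
      have hmem : {s : ℝ | (Function.update p.1 i s, p.2) ∈ D} ∈ nhds (p.1 i) := by
        apply hcont.preimage_mem_nhds
        rw [Function.update_eq_self]
        exact hD.mem_nhds hp
      filter_upwards [hmem] with s hs
      exact hpT _ hs
    have h2 := bridgeX (g := b) (x := p.1) (i := i) (t := p.2) (s := p.1 i)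
      (by rw [Function.update_eq_self]; exact hb_d p hp)
    rw [Function.update_eq_self] at h2
    have : partialX n (partialT n f) i p = fderiv ℝ b p (Pi.single i 1, 0) := by
      show deriv (fun s => partialT n f (Function.update p.1 i s, p.2)) (p.1 i) = _
      rw [hEv.deriv_eq]
      exact h2.deriv
    rw [this] at key
    exact key
  -- G = exp(-f/m) * b has vanishing spatial derivatives on D
  set G : (Fin n → ℝ) × ℝ → ℝ := fun q => Real.exp (-f q / m) * b q with hGdef
  have hG_cd : ∀ p ∈ D, ContDiffAt ℝ (⊤ : ℕ∞) G p := fun p hp =>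
    (((hfa p hp).neg.div_const m).exp).mul (hb_cd p hp)
  have hG_d : ∀ p ∈ D, DifferentiableAt ℝ G p := fun p hp =>
    (hG_cd p hp).differentiableAt (by simp)
  have hGdir : ∀ p ∈ D, ∀ i : Fin n, fderiv ℝ G p (Pi.single i 1, 0) = 0 := by
    intro p hp i
    have hfl : HasDerivAt (fun s => f (Function.update p.1 i s, p.2))
        (fderiv ℝ f p (Pi.single i 1, 0)) (p.1 i) := by
      have h := bridgeX (g := f) (x := p.1) (i := i) (t := p.2) (s := p.1 i)
        (by rw [Function.update_eq_self]; exact hfd p hp)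
      rwa [Function.update_eq_self] at h
    have hbl : HasDerivAt (fun s => b (Function.update p.1 i s, p.2))
        (1 / m * fderiv ℝ f p (Pi.single i 1, 0) * b p) (p.1 i) := by
      have h := bridgeX (g := b) (x := p.1) (i := i) (t := p.2) (s := p.1 i)
        (by rw [Function.update_eq_self]; exact hb_d p hp)
      rw [Function.update_eq_self] at h
      rwa [hqe6 p hp i] at h
    have hexp : HasDerivAt (fun s => Real.exp (-f (Function.update p.1 i s, p.2) / m))
        (Real.exp (-f p / m) * (-fderiv ℝ f p (Pi.single i 1, 0) / m)) (p.1 i) := by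
      have h := (hfl.neg.div_const m).exp
      simp only [Pi.neg_apply] at h
      rw [Function.update_eq_self] at h
      exact h
    have hprod := hexp.mul hbl
    rw [Function.update_eq_self] at hprod
    have hzero : Real.exp (-f p / m) * (-fderiv ℝ f p (Pi.single i 1, 0) / m) * b p
        + Real.exp (-f p / m) * (1 / m * fderiv ℝ f p (Pi.single i 1, 0) * b p) = 0 := by
      field_simp
      ring
    rw [hzero] at hprod
    have hGl := bridgeX (g := G) (x := p.1) (i := i) (t := p.2) (s := p.1 i)
      (by rw [Function.update_eq_self]; exact hG_d p hp)
    rw [Function.update_eq_self] at hGl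
    have : (fun s => Real.exp (-f (Function.update p.1 i s, p.2) / m)
        * b (Function.update p.1 i s, p.2)) = fun s => G (Function.update p.1 i s, p.2) := rfl
    replace hprod : HasDerivAt (fun s => G (Function.update p.1 i s, p.2)) 0 (p.1 i) := hprod
    exact (hprod.unique hGl).symm
  -- G is independent of x (at fixed t)
  have hGconst : ∀ (t : ℝ) (x y : Fin n → ℝ), 0 < x l → 0 < y l → G (x, t) = G (y, t) := by
    intro t x y hx hy
    set Ht : Set (Fin n → ℝ) := {x : Fin n → ℝ | 0 < x l} with hHtdef
    have hHtconv : Convex ℝ Ht := by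
      have : IsLinearMap ℝ (fun x : Fin n → ℝ => x l) := ⟨fun a b => rfl, fun c a => rfl⟩
      exact convex_halfSpace_gt this 0
    have hHtopen : IsOpen Ht := isOpen_lt continuous_const (continuous_apply l)
    set Gt : (Fin n → ℝ) → ℝ := fun x => G (x, t) with hGtdef
    have key : ∀ z ∈ Ht, HasFDerivAt Gt
        ((fderiv ℝ G (z, t)).comp
          ((ContinuousLinearMap.id ℝ (Fin n → ℝ)).prod (0 : (Fin n → ℝ) →L[ℝ] ℝ))) z := by
      intro z hz
      have hzD : ((z, t) : (Fin n → ℝ) × ℝ) ∈ D := hz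
      have h1 : HasFDerivAt G (fderiv ℝ G (z, t)) (z, t) := (hG_d _ hzD).hasFDerivAt
      have h2 : HasFDerivAt (fun x : Fin n → ℝ => ((x, t) : (Fin n → ℝ) × ℝ))
          ((ContinuousLinearMap.id ℝ (Fin n → ℝ)).prod (0 : (Fin n → ℝ) →L[ℝ] ℝ)) z :=
        (hasFDerivAt_id z).prodMk (hasFDerivAt_const t z)
      exact h1.comp z h2
    have hzero : ∀ z ∈ Ht, ((fderiv ℝ G (z, t)).comp
        ((ContinuousLinearMap.id ℝ (Fin n → ℝ)).prod (0 : (Fin n → ℝ) →L[ℝ] ℝ)))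
        = (0 : (Fin n → ℝ) →L[ℝ] ℝ) := by
      intro z hz
      apply ContinuousLinearMap.ext
      intro v
      have hv : ((fderiv ℝ G (z, t)).comp
          ((ContinuousLinearMap.id ℝ (Fin n → ℝ)).prod (0 : (Fin n → ℝ) →L[ℝ] ℝ))) v
          = fderiv ℝ G (z, t) ((v, (0 : ℝ))) := rfl
      rw [hv, vec_decomp v, map_sum]
      simp only [map_smul]
      rw [Finset.sum_eq_zero]
      · simp
      · intro i _
        rw [hGdir (z, t) hz i]
        simp
    have hdiff : DifferentiableOn ℝ Gt Ht := by
      intro z hz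
      exact ((key z hz).differentiableAt).differentiableWithinAt
    have hfd0 : ∀ z ∈ Ht, fderivWithin ℝ Gt Ht z = 0 := by
      intro z hz
      rw [fderivWithin_of_isOpen hHtopen hz, (key z hz).fderiv, hzero z hz]
    exact hHtconv.is_const_of_fderivWithin_eq_zero hdiff hfd0 hx hy
  -- ===== t-line machinery =====
  have hFline : ∀ (x : Fin n → ℝ), 0 < x l → ∀ t : ℝ,
      ContDiffAt ℝ (⊤ : ℕ∞) (fun s : ℝ => f (x, s)) t := by
    intro x hx t
    exact (hfa (x, t) hx).comp t (contDiff_lineT x).contDiffAt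
  have hgx' : ∀ (x : Fin n → ℝ), 0 < x l → ∀ t : ℝ,
      HasDerivAt (fun t' => Real.exp (-f (x, t') / m)) (-(1/m) * G (x, t)) t := by
    intro x hx t
    have hb1 : HasDerivAt (fun s => f (x, s)) (b (x, t)) t := bridgeT (hfd (x, t) hx)
    have h := (hb1.neg.div_const m).exp
    have hval : Real.exp (-f (x, t) / m) * (-b (x, t) / m) = -(1/m) * G (x, t) := by
      simp only [hGdef]
      ring
    simp only [Pi.neg_apply] at h
    rwa [hval] at h
  have hgx'' : ∀ (x : Fin n → ℝ), 0 < x l → ∀ t : ℝ,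
      HasDerivAt (fun t' => -(1/m) * G (x, t')) (-(lam/m) * Real.exp (-f (x, t) / m)) t := by
    intro x hx t
    set F : ℝ → ℝ := fun s => f (x, s) with hFdef
    set F1 : ℝ → ℝ := deriv F with hF1def
    have hF1 : ∀ t : ℝ, HasDerivAt F (F1 t) t := fun t =>
      ((hFline x hx t).differentiableAt (by simp)).hasDerivAt
    have hF2 : ∀ t : ℝ, HasDerivAt F1 (deriv F1 t) t := fun t =>
      hasDerivAt_deriv_of_contDiffAt (hFline x hx t)
    have heq3 : ∀ t : ℝ, deriv F1 t = 1 / m * (F1 t)^2 + lam := by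
      intro t
      have h := (hqe (x, t) hx).2.2.1
      exact h
    have hgxderiv : (fun t' => -(1/m) * G (x, t')) = fun t' => Real.exp (-(F t') / m) * (-(F1 t') / m) := by
      funext t'
      have h1 := hgx' x hx t'
      have h2 := ((hF1 t').neg.div_const m).exp
      exact (h1.unique h2)
    have hprod := (((hF1 t).neg.div_const m).exp).mul ((hF2 t).neg.div_const m)
    have hval : Real.exp (-F t / m) * (-F1 t / m) * (-F1 t / m)
        + Real.exp (-F t / m) * (-(deriv F1 t) / m) = -(lam/m) * Real.exp (-f (x, t) / m) := by
      rw [heq3 t]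
      have : f (x, t) = F t := rfl
      rw [this]
      field_simp
      ring
    simp only [Pi.neg_apply] at hprod
    rw [hval] at hprod
    rw [hgxderiv]
    exact hprod
  -- ===== vertical line at x0 =====
  have hn1 : (1:ℝ) ≤ (n:ℝ) - 1 := by
    have h2n : (2:ℝ) ≤ (n:ℝ) := by exact_mod_cast hn
    linarith
  set x0 : Fin n → ℝ := fun _ => 1 with hx0def
  have hx0l : x0 l = 1 := by rw [hx0def]
  have hx0 : 0 < x0 l := by rw [hx0l]; norm_num
  have hvertD : ∀ s : ℝ, 0 < s →
      ((Function.update x0 l s, (0:ℝ)) : (Fin n → ℝ) × ℝ) ∈ D := by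
    intro s hs
    show 0 < Function.update x0 l s l
    rwa [Function.update_self]
  set φ : ℝ → ℝ := fun s => f (Function.update x0 l s, 0) with hφdef
  have hφcd : ∀ s : ℝ, 0 < s → ContDiffAt ℝ (⊤ : ℕ∞) φ s := by
    intro s hs
    exact (hfa _ (hvertD s hs)).comp s (contDiff_lineX x0 l 0).contDiffAt
  set φ1 : ℝ → ℝ := deriv φ with hφ1def
  have hφ1 : ∀ s : ℝ, 0 < s → HasDerivAt φ (φ1 s) s := fun s hs =>
    ((hφcd s hs).differentiableAt (by simp)).hasDerivAt
  have hφ2 : ∀ s : ℝ, 0 < s → HasDerivAt φ1 (deriv φ1 s) s := fun s hs =>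
    hasDerivAt_deriv_of_contDiffAt (hφcd s hs)
  have hfunφ1 : (fun s' => partialX n f l (Function.update x0 l s', 0)) = φ1 := by
    funext s'
    simp only [partialX, Function.update_idem, Function.update_self]
    rfl
  have hODE : ∀ s : ℝ, 0 < s →
      s * φ1 s + s^2 * deriv φ1 s = s^2 / m * (φ1 s)^2 + lam + ((n:ℝ) - 1) := by
    intro s hs
    have h := (hqe _ (hvertD s hs)).2.1
    have e1 : partialX n f l (Function.update x0 l s, 0) = φ1 s := by
      simp only [partialX, Function.update_idem, Function.update_self]
      rfl
    have e2 : partialX n (partialX n f l) l (Function.update x0 l s, 0) = deriv φ1 s := by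
      conv_lhs => rw [partialX]
      simp only [Function.update_idem, Function.update_self]
      rw [hfunφ1]
    rw [← hldef] at h
    simp only [e1, e2, Function.update_self] at h
    linarith [h]
  -- ===== Step B : lam + (n-1) ≤ 0 =====
  have hmu : lam + ((n:ℝ) - 1) ≤ 0 := by
    by_contra hmu
    push_neg at hmu
    set c : ℝ := (lam + ((n:ℝ) - 1)) / m with hcdef
    have hc : 0 < c := div_pos hmu hm
    set χ : ℝ → ℝ := fun r => Real.exp (-(φ (Real.exp r)) / m) with hχdef
    set χd : ℝ → ℝ :=
      fun r => Real.exp (-(φ (Real.exp r)) / m) * (-(φ1 (Real.exp r)) / m) * Real.exp r with hχddef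
    have hχ1 : ∀ r, HasDerivAt χ (χd r) r := by
      intro r
      have he : HasDerivAt Real.exp (Real.exp r) r := Real.hasDerivAt_exp r
      have h1 : HasDerivAt (fun s => Real.exp (-(φ s) / m))
          (Real.exp (-(φ (Real.exp r)) / m) * (-(φ1 (Real.exp r)) / m)) (Real.exp r) :=
        (((hφ1 _ (Real.exp_pos r)).neg.div_const m).exp)
      have h2 := h1.comp r he
      exact h2
    have hχ2 : ∀ r, HasDerivAt χd (-(c * χ r)) r := by
      intro r
      set s : ℝ := Real.exp r with hsdef
      have hs : 0 < s := Real.exp_pos r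
      have he : HasDerivAt Real.exp s r := Real.hasDerivAt_exp r
      have hφ1c : HasDerivAt (fun r' => φ1 (Real.exp r')) (deriv φ1 s * s) r := by
        have := (hφ2 s hs).comp r he; exact this
      have hφc : HasDerivAt (fun r' => φ (Real.exp r')) (φ1 s * s) r := by
        have := (hφ1 s hs).comp r he; exact this
      have hA : HasDerivAt (fun r' => Real.exp (-(φ (Real.exp r')) / m))
          (Real.exp (-(φ s) / m) * (-(φ1 s * s) / m)) r := ((hφc.neg.div_const m).exp)
      have hB : HasDerivAt (fun r' => -(φ1 (Real.exp r')) / m) (-(deriv φ1 s * s) / m) r :=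
        (hφ1c.neg.div_const m)
      have h := ((hA.mul hB).mul he)
      have hval : (Real.exp (-(φ s) / m) * (-(φ1 s * s) / m) * (-(φ1 s) / m)
            + Real.exp (-(φ s) / m) * (-(deriv φ1 s * s) / m)) * s
            + Real.exp (-(φ s) / m) * (-(φ1 s) / m) * s = -(c * χ r) := by
        have hode := hODE s hs
        have hs2 : (s:ℝ)^2 ≠ 0 := by positivity
        have hd : deriv φ1 s =
            (s^2 / m * (φ1 s)^2 + lam + ((n:ℝ) - 1) - s * φ1 s) / s^2 := by
          rw [eq_div_iff hs2]
          linear_combination hode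
        have hχr : χ r = Real.exp (-(φ s) / m) := by
          rw [hχdef]
        rw [hd, hcdef, hχr]
        field_simp
        ring
      have h' : HasDerivAt χd ((Real.exp (-(φ s) / m) * (-(φ1 s * s) / m) * (-(φ1 s) / m)
            + Real.exp (-(φ s) / m) * (-(deriv φ1 s * s) / m)) * s
            + Real.exp (-(φ s) / m) * (-(φ1 s) / m) * s) r := h
      rwa [hval] at h'
    exact no_pos_osc hc hχ1 hχ2 (fun r => Real.exp_pos _)
  have hlamneg : lam < 0 := by linarith
  -- ===== Step C : f is independent of x =====
  have hxind : ∀ (x : Fin n → ℝ), 0 < x l → ∀ t : ℝ,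
      Real.exp (-f (x, t) / m) = Real.exp (-f (x0, t) / m) := by
    intro x hx t
    have h1 := hgx'' x hx t
    have h2 := hgx'' x0 hx0 t
    have hfun : (fun t' => -(1/m) * G (x, t')) = fun t' => -(1/m) * G (x0, t') := by
      funext t'
      rw [hGconst t' x x0 hx hx0]
    rw [hfun] at h1
    have huniq := h1.unique h2
    have hlm : -(lam / m) ≠ 0 := by
      apply neg_ne_zero.2
      exact div_ne_zero (by linarith) hm'
    exact mul_left_cancel₀ hlm huniq
  have hfind : ∀ (x : Fin n → ℝ), 0 < x l → ∀ t : ℝ, f (x, t) = f (x0, t) := by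
    intro x hx t
    have h := Real.exp_eq_exp.mp (hxind x hx t)
    have h2 : -f (x, t) = -f (x0, t) := by
      rw [div_left_inj' hm'] at h
      exact h
    linarith
  -- ===== lam = -(n-1) =====
  have hconstφ : ∀ s : ℝ, 0 < s → φ s = f (x0, 0) := by
    intro s hs
    rw [hφdef]
    exact hfind (Function.update x0 l s) (by rw [Function.update_self]; exact hs) 0
  have hφ1zero : ∀ s : ℝ, 0 < s → φ1 s = 0 := by
    intro s hs
    have hEv : φ =ᶠ[nhds s] fun _ => f (x0, 0) := by
      filter_upwards [Ioi_mem_nhds hs] with s' hs'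
      exact hconstφ s' hs'
    rw [hφ1def, hEv.deriv_eq, deriv_const]
  have hlam : lam = -((n:ℝ) - 1) := by
    have hode := hODE 1 one_pos
    have hφ1one : φ1 1 = 0 := hφ1zero 1 one_pos
    have hdφ1 : deriv φ1 1 = 0 := by
      have hEv : φ1 =ᶠ[nhds (1:ℝ)] fun _ => (0:ℝ) := by
        filter_upwards [Ioi_mem_nhds (by norm_num : (0:ℝ) < 1)] with s hs
        exact hφ1zero s hs
      rw [hEv.deriv_eq, deriv_const]
    rw [hφ1one, hdφ1] at hode
    simp at hode
    linarith
  refine ⟨hlam, ?_⟩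
  -- ===== the 1D ODE for U(t) = exp(-f(x0,t)/m) =====
  set U : ℝ → ℝ := fun t => Real.exp (-f (x0, t) / m) with hUdef
  have hUpos : ∀ t, 0 < U t := fun t => Real.exp_pos _
  have hn1pos : (0:ℝ) < (n:ℝ) - 1 := by linarith
  set k : ℝ := Real.sqrt (((n:ℝ) - 1) / m) with hkdef
  have hk : 0 < k := Real.sqrt_pos.2 (div_pos hn1pos hm)
  have hk2 : k^2 = ((n:ℝ) - 1) / m := Real.sq_sqrt (div_pos hn1pos hm).le
  have hU1 : ∀ t, HasDerivAt U (-(1/m) * G (x0, t)) t := hgx' x0 hx0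
  have hUd : deriv U = fun t => -(1/m) * G (x0, t) := funext fun t => (hU1 t).deriv
  have hU1' : ∀ t, HasDerivAt U (deriv U t) t := by
    intro t
    rw [hUd]
    exact hU1 t
  have hU2 : ∀ t, HasDerivAt (deriv U) (k^2 * U t) t := by
    intro t
    have h := hgx'' x0 hx0 t
    rw [← hUd] at h
    have hval : -(lam/m) * Real.exp (-f (x0, t) / m) = k^2 * U t := by
      rw [hk2, hlam, hUdef]
      ring
    rwa [hval] at h
  have hsol := ode_sol hk hU1' hU2
  set A : ℝ := (U 0 + deriv U 0 / k) / 2 with hAdef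
  set B : ℝ := (U 0 - deriv U 0 / k) / 2 with hBdef
  have hposAB : ∀ t, 0 < A * Real.exp (k*t) + B * Real.exp (-(k*t)) := by
    intro t
    rw [← hsol t]
    exact hUpos t
  obtain ⟨hA0, hB0⟩ := pos_coeffs hk hposAB
  have hfval : ∀ p : (Fin n → ℝ) × ℝ, 0 < p.1 l → f p = -m * Real.log (U p.2) := by
    intro p hp
    have h1 : f p = f (x0, p.2) := hfind p.1 hp p.2
    rw [h1, hUdef, Real.log_exp]
    field_simp
  have hABsum : A + B = U 0 := by rw [hAdef, hBdef]; ring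
  have hsqrt_eq : Real.sqrt (((n:ℝ) - 1) * m) = m * k := by
    rw [hkdef, show ((n:ℝ) - 1) * m = m^2 * (((n:ℝ) - 1)/m) by field_simp,
      Real.sqrt_mul (sq_nonneg m), Real.sqrt_sq hm.le]
  rcases eq_or_lt_of_le hA0 with hA | hA
  · -- A = 0, B > 0 : linear with ε = 1
    have hB : 0 < B := by
      rcases eq_or_lt_of_le hB0 with hB | hB
      · exfalso
        have h0 := hUpos 0
        rw [← hABsum, ← hA, ← hB] at h0
        simp at h0
      · exact hB
    refine ⟨-m * Real.log B, Or.inl ⟨1, Or.inr rfl, ?_⟩⟩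
    intro p hp
    rw [hfval p hp, hsol p.2, ← hA]
    rw [zero_mul, zero_add, Real.log_mul hB.ne' (Real.exp_pos _).ne', Real.log_exp, hsqrt_eq]
    ring
  · rcases eq_or_lt_of_le hB0 with hB | hB
    · -- B = 0, A > 0 : linear with ε = -1
      refine ⟨-m * Real.log A, Or.inl ⟨-1, Or.inl rfl, ?_⟩⟩
      intro p hp
      rw [hfval p hp, hsol p.2, ← hB]
      rw [zero_mul, add_zero, Real.log_mul hA.ne' (Real.exp_pos _).ne', Real.log_exp, hsqrt_eq]
      ring
    · -- A > 0, B > 0 : cosh case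
      refine ⟨-m * Real.log (2 * Real.sqrt (A*B)), Or.inr ⟨Real.log (Real.sqrt (A/B)), ?_⟩⟩
      intro p hp
      have hsAB : 0 < Real.sqrt (A*B) := Real.sqrt_pos.2 (by positivity)
      have hsABd : 0 < Real.sqrt (A/B) := Real.sqrt_pos.2 (by positivity)
      have h1 : Real.sqrt (A*B) * Real.sqrt (A/B) = A := by
        rw [← Real.sqrt_mul (by positivity), show A*B*(A/B) = A^2 by field_simp]
        exact Real.sqrt_sq hA.le
      have h2 : Real.sqrt (A*B) / Real.sqrt (A/B) = B := by
        rw [← Real.sqrt_div (by positivity), show (A*B)/(A/B) = B^2 by field_simp]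
        exact Real.sqrt_sq hB.le
      have hid : A * Real.exp (k * p.2) + B * Real.exp (-(k * p.2))
          = 2 * Real.sqrt (A*B) * Real.cosh (k * p.2 + Real.log (Real.sqrt (A/B))) := by
        have e1 : Real.exp (k * p.2 + Real.log (Real.sqrt (A/B)))
            = Real.exp (k * p.2) * Real.sqrt (A/B) := by
          rw [Real.exp_add, Real.exp_log hsABd]
        have e2 : Real.exp (-(k * p.2 + Real.log (Real.sqrt (A/B))))
            = Real.exp (-(k * p.2)) / Real.sqrt (A/B) := by
          rw [show -(k * p.2 + Real.log (Real.sqrt (A/B)))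
              = -(k * p.2) - Real.log (Real.sqrt (A/B)) by ring,
            Real.exp_sub, Real.exp_log hsABd]
        rw [Real.cosh_eq, e1, e2]
        linear_combination (-(Real.exp (k * p.2))) * h1 + (-(Real.exp (-(k * p.2)))) * h2
      rw [hfval p hp, hsol p.2, hid]
      rw [Real.log_mul (by positivity) (Real.cosh_pos _).ne']
      ring
end

section
/- Let n ≥ 2 be an integer, m > 0 a real number, λ a real number, and let f : {(x,t) ∈ ℝⁿ × ℝ : xₙ > 0} → ℝ be a smooth function satisfying the quasi-Einstein PDE system for (f, m, λ). Then λ = −(n−1); in particular λ < 0, so every quasi-Einstein structure on ℍⁿ × ℝ is expanding. -/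
open Real

/-- There is no positive function on `ℝ` with `g'' = μ g` for `μ < 0`. -/
lemma no_pos_sol (μ : ℝ) (hμ : μ < 0) (g g' : ℝ → ℝ)
    (hg : ∀ r, HasDerivAt g (g' r) r)
    (hg' : ∀ r, HasDerivAt g' (μ * g r) r)
    (hpos : ∀ r, 0 < g r) : False := by
  have hanti : StrictAnti g' :=
    strictAnti_of_hasDerivAt_neg hg' (fun x => mul_neg_of_neg_of_pos hμ (hpos x))
  have mvt : ∀ a b : ℝ, a < b → ∃ ξ ∈ Set.Ioo a b, g' ξ = (g b - g a) / (b - a) := by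
    intro a b hab
    exact exists_hasDerivAt_eq_slope g g' hab
      (fun x _ => (hg x).continuousAt.continuousWithinAt) (fun x _ => hg x)
  rcases lt_or_ge (g' 1) 0 with h1 | h1
  · have hne : g' 1 ≠ 0 := ne_of_lt h1
    have hq : 0 < g 1 / (-(g' 1)) := div_pos (hpos 1) (by linarith)
    have hb1 : 1 < 1 + g 1 / (-(g' 1)) := by linarith
    obtain ⟨ξ, hξ, hslope⟩ := mvt 1 (1 + g 1 / (-(g' 1))) hb1
    have hξ1 : g' ξ < g' 1 := hanti hξ.1
    rw [hslope] at hξ1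
    have hba : (0:ℝ) < 1 + g 1 / (-(g' 1)) - 1 := by linarith
    have h2 : g (1 + g 1 / (-(g' 1))) - g 1 < g' 1 * (1 + g 1 / (-(g' 1)) - 1) := by
      calc g (1 + g 1 / (-(g' 1))) - g 1
          = (g (1 + g 1 / (-(g' 1))) - g 1) / (1 + g 1 / (-(g' 1)) - 1)
            * (1 + g 1 / (-(g' 1)) - 1) := (div_mul_cancel₀ _ (ne_of_gt hba)).symm
        _ < g' 1 * (1 + g 1 / (-(g' 1)) - 1) := mul_lt_mul_of_pos_right hξ1 hba
    have key : ∀ x y : ℝ, y ≠ 0 → y * (x / y) = x := fun x y hy => by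
      rw [← mul_div_assoc, mul_comm, mul_div_assoc, div_self hy, mul_one]
    have h3 : g' 1 * (1 + g 1 / (-(g' 1)) - 1) = -(g 1) := by
      calc g' 1 * (1 + g 1 / (-(g' 1)) - 1) = -(g' 1 * (g 1 / g' 1)) := by
            rw [div_neg]; ring
        _ = -(g 1) := by rw [key _ _ hne]
    have := hpos (1 + g 1 / (-(g' 1)))
    linarith
  · have h0 : 0 < g' 0 := lt_of_le_of_lt h1 (hanti zero_lt_one)
    have hne : g' 0 ≠ 0 := ne_of_gt h0
    have hq : 0 < g 0 / g' 0 := div_pos (hpos 0) h0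
    have ha0 : -(g 0 / g' 0) - 1 < 0 := by linarith
    obtain ⟨ξ, hξ, hslope⟩ := mvt (-(g 0 / g' 0) - 1) 0 ha0
    have hξ0 : g' 0 < g' ξ := hanti hξ.2
    rw [hslope] at hξ0
    have hpa : (0:ℝ) < 0 - (-(g 0 / g' 0) - 1) := by linarith
    have h2 : g' 0 * (0 - (-(g 0 / g' 0) - 1)) < g 0 - g (-(g 0 / g' 0) - 1) := by
      calc g' 0 * (0 - (-(g 0 / g' 0) - 1))
          < (g 0 - g (-(g 0 / g' 0) - 1)) / (0 - (-(g 0 / g' 0) - 1))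
            * (0 - (-(g 0 / g' 0) - 1)) := mul_lt_mul_of_pos_right hξ0 hpa
        _ = g 0 - g (-(g 0 / g' 0) - 1) := div_mul_cancel₀ _ (ne_of_gt hpa)
    have key : ∀ x y : ℝ, y ≠ 0 → y * (x / y) = x := fun x y hy => by
      rw [← mul_div_assoc, mul_comm, mul_div_assoc, div_self hy, mul_one]
    have h3 : g' 0 * (0 - (-(g 0 / g' 0) - 1)) = g 0 + g' 0 := by
      calc g' 0 * (0 - (-(g 0 / g' 0) - 1)) = g' 0 * (g 0 / g' 0) + g' 0 := by ring
        _ = g 0 + g' 0 := by rw [key _ _ hne]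
    have := hpos (-(g 0 / g' 0) - 1)
    linarith

/-- Any smooth solution of the quasi-Einstein PDE system on `ℍⁿ × ℝ` has `λ = −(n−1)`;
in particular `λ < 0`, so every quasi-Einstein structure on `ℍⁿ × ℝ` is expanding. -/
theorem quasiEinstein_on_hyperbolic_times_real_is_expanding
    (n : ℕ) (hn : 2 ≤ n) (m lam : ℝ) (hm : 0 < m)
    (f : (Fin n → ℝ) × ℝ → ℝ)
    (hf : ContDiffOn ℝ (⊤ : ℕ∞) f {p : (Fin n → ℝ) × ℝ | 0 < p.1 (lastIdx n hn)})
    (hqe : QESystem n hn m lam f) :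
    lam = -((n : ℝ) - 1) ∧ lam < 0 := by
  classical
  set L := lastIdx n hn with hLdef
  have hn1 : (1:ℝ) ≤ (n:ℝ) - 1 := by
    have h2 : (2:ℝ) ≤ (n:ℝ) := by exact_mod_cast hn
    linarith
  set c := lam + ((n : ℝ) - 1) with hcdef
  suffices hc0 : c = 0 by
    constructor
    · linarith
    · linarith
  by_contra hc0
  set μ := -(c / m) with hmudef
  set ν := -(lam / m) with hnudef
  have hm' : m ≠ 0 := ne_of_gt hm
  set D : Set ((Fin n → ℝ) × ℝ) := {p : (Fin n → ℝ) × ℝ | 0 < p.1 L} with hDdef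
  have hDo : IsOpen D := isOpen_lt continuous_const ((continuous_apply L).comp continuous_fst)
  set x₀ : Fin n → ℝ := fun _ => 1 with hx0def
  have hmem : ∀ t s : ℝ, 0 < s → ((Function.update x₀ L s, t) : (Fin n → ℝ) × ℝ) ∈ D := by
    intro t s hs
    simpa [hDdef, Function.update_self] using hs
  have hup : ContDiff ℝ (⊤ : ℕ∞) (fun s : ℝ => Function.update x₀ L s) :=
    contDiff_update (⊤ : ℕ∞) x₀ L
  set U : ℝ → ℝ → ℝ := fun t s => f (Function.update x₀ L s, t) with hUdef
  have hUC : ∀ t, ContDiffOn ℝ (⊤ : ℕ∞) (U t) (Set.Ioi 0) := by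
    intro t
    have hcur : ContDiff ℝ (⊤ : ℕ∞)
        (fun s : ℝ => ((Function.update x₀ L s, t) : (Fin n → ℝ) × ℝ)) :=
      hup.prodMk contDiff_const
    exact hf.comp hcur.contDiffOn (fun s hs => hmem t s hs)
  have hUd : ∀ t s : ℝ, 0 < s → DifferentiableAt ℝ (U t) s := fun t s hs =>
    ((hUC t).differentiableOn (by simp)).differentiableAt (Ioi_mem_nhds hs)
  have hU'd : ∀ t s : ℝ, 0 < s → DifferentiableAt ℝ (deriv (U t)) s := fun t s hs =>
    (((hUC t).deriv_of_isOpen (m := (⊤ : ℕ∞)) isOpen_Ioi (by simp)).differentiableOn (by simp)).differentiableAt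
      (Ioi_mem_nhds hs)
  set V : ℝ → ℝ → ℝ := fun r t => f (Function.update x₀ L (Real.exp r), t) with hVdef
  have hVC : ∀ r, ContDiff ℝ (⊤ : ℕ∞) (V r) := by
    intro r
    have hcur : ContDiff ℝ (⊤ : ℕ∞)
        (fun t : ℝ => ((Function.update x₀ L (Real.exp r), t) : (Fin n → ℝ) × ℝ)) :=
      contDiff_const.prodMk contDiff_id
    have h1 := hf.comp (s := Set.univ) hcur.contDiffOn (fun t _ => hmem t _ (Real.exp_pos r))
    rw [← contDiffOn_univ]
    exact h1
  have hVd : ∀ r t : ℝ, DifferentiableAt ℝ (V r) t := fun r t =>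
    ((hVC r).differentiable (by simp)) t
  have hV'd : ∀ r t : ℝ, DifferentiableAt ℝ (deriv (V r)) t := by
    intro r t
    have h1 := (contDiffOn_univ.2 (hVC r)).deriv_of_isOpen (m := (⊤ : ℕ∞)) isOpen_univ (by simp)
    rw [contDiffOn_univ] at h1
    exact (h1.differentiable (by simp)) t
  -- rewriting lemmas
  have R1 : ∀ t s : ℝ, partialX n f L (Function.update x₀ L s, t) = deriv (U t) s := by
    intro t s
    simp only [partialX, hUdef, Function.update_idem, Function.update_self]
  have R2 : ∀ t s : ℝ, partialX n (partialX n f L) L (Function.update x₀ L s, t)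
      = deriv (deriv (U t)) s := by
    intro t s
    simp only [partialX, hUdef, Function.update_idem, Function.update_self]
  have R5 : ∀ t s : ℝ, partialX n (partialT n f) L (Function.update x₀ L s, t)
      = deriv (fun s' => partialT n f (Function.update x₀ L s', t)) s := by
    intro t s
    simp only [partialX, Function.update_idem, Function.update_self]
  have hPV : ∀ r t : ℝ, partialT n f (Function.update x₀ L (Real.exp r), t)
      = deriv (V r) t := by
    intro r t
    simp only [partialT, hVdef]
  -- the PDE specializations
  have E2 : ∀ t s : ℝ, 0 < s →
      s * deriv (U t) s + s ^ 2 * deriv (deriv (U t)) s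
        = s ^ 2 / m * (deriv (U t) s) ^ 2 + c := by
    intro t s hs
    have h := (hqe (Function.update x₀ L s, t)
      (by show 0 < Function.update x₀ L s L; simpa [Function.update_self] using hs)).2.1
    simp only [← hLdef, Function.update_self, R1, R2] at h
    rw [hcdef]
    linarith [h]
  have E3 : ∀ r t : ℝ, deriv (deriv (V r)) t = 1 / m * (deriv (V r) t) ^ 2 + lam := by
    intro r t
    have h := (hqe (Function.update x₀ L (Real.exp r), t)
      (by show 0 < Function.update x₀ L (Real.exp r) L; simpa [Function.update_self] using Real.exp_pos r)).2.2.1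
    simpa [partialT, hVdef] using h
  have E6 : ∀ t s : ℝ, 0 < s →
      deriv (fun s' => partialT n f (Function.update x₀ L s', t)) s
        = 1 / m * deriv (U t) s * partialT n f (Function.update x₀ L s, t) := by
    intro t s hs
    have h := (hqe (Function.update x₀ L s, t)
      (by show 0 < Function.update x₀ L s L; simpa [Function.update_self] using hs)).2.2.2.2.2 L
    rw [R5, R1] at h
    exact h
    -- `partialT` agrees on `D` with a smooth function built from `fderiv`
  have hpTC : ContDiffOn ℝ (⊤ : ℕ∞) (fun p => fderiv ℝ f p ((0 : Fin n → ℝ), (1:ℝ))) D :=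
    (hf.fderiv_of_isOpen (m := (⊤ : ℕ∞)) hDo (by simp)).clm_apply contDiffOn_const
  have hpT_eq : ∀ p ∈ D, partialT n f p = fderiv ℝ f p ((0 : Fin n → ℝ), (1:ℝ)) := by
    intro p hp
    have hdf : DifferentiableAt ℝ f p :=
      (hf.differentiableOn (by simp)).differentiableAt (hDo.mem_nhds hp)
    have hcurve : HasDerivAt (fun t' : ℝ => ((p.1, t') : (Fin n → ℝ) × ℝ))
        ((0 : Fin n → ℝ), (1:ℝ)) p.2 := (hasDerivAt_const p.2 p.1).prodMk (hasDerivAt_id p.2)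
    have h := hdf.hasFDerivAt.comp_hasDerivAt p.2 hcurve
    simpa [partialT, Function.comp_def] using h.deriv
  have hQd : ∀ t s : ℝ, 0 < s →
      DifferentiableAt ℝ (fun s' => partialT n f (Function.update x₀ L s', t)) s := by
    intro t s hs
    have hcur : ContDiff ℝ (⊤ : ℕ∞)
        (fun s' : ℝ => ((Function.update x₀ L s', t) : (Fin n → ℝ) × ℝ)) :=
      hup.prodMk contDiff_const
    have h1 : ContDiffOn ℝ (⊤ : ℕ∞)
        (fun s' : ℝ => fderiv ℝ f (Function.update x₀ L s', t) ((0 : Fin n → ℝ), (1:ℝ)))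
        (Set.Ioi 0) := hpTC.comp hcur.contDiffOn (fun s' hs' => hmem t s' hs')
    have h2 : DifferentiableAt ℝ
        (fun s' : ℝ => fderiv ℝ f (Function.update x₀ L s', t) ((0 : Fin n → ℝ), (1:ℝ))) s :=
      (h1.differentiableOn (by simp)).differentiableAt (Ioi_mem_nhds hs)
    have heq : (fun s' => partialT n f (Function.update x₀ L s', t))
        =ᶠ[nhds s] (fun s' : ℝ =>
          fderiv ℝ f (Function.update x₀ L s', t) ((0 : Fin n → ℝ), (1:ℝ))) := by
      filter_upwards [Ioi_mem_nhds hs] with s' hs'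
      exact hpT_eq _ (hmem t s' hs')
    exact heq.differentiableAt_iff.2 h2
  -- the functions E, A
  set E : ℝ → ℝ → ℝ := fun t r => Real.exp (-(U t (Real.exp r)) / m) with hEdef
  have hEpos : ∀ t r, 0 < E t r := fun t r => Real.exp_pos _
  set A : ℝ → ℝ → ℝ :=
    fun t r => E t r * (-(Real.exp r * deriv (U t) (Real.exp r)) / m) with hAdef
  have hUr : ∀ t r : ℝ, HasDerivAt (fun r' : ℝ => U t (Real.exp r'))
      (deriv (U t) (Real.exp r) * Real.exp r) r := by
    intro t r
    have h := ((hUd t _ (Real.exp_pos r)).hasDerivAt).comp r (Real.hasDerivAt_exp r)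
    simpa [Function.comp_def] using h
  have hE1 : ∀ t r, HasDerivAt (fun r' => E t r') (A t r) r := by
    intro t r
    have h1 : HasDerivAt (fun r' : ℝ => -(U t (Real.exp r')) / m)
        (-(deriv (U t) (Real.exp r) * Real.exp r) / m) r := ((hUr t r).neg).div_const m
    have h2 := h1.exp
    have hfun : (fun r' : ℝ => Real.exp (-(U t (Real.exp r')) / m)) = fun r' => E t r' := by
      funext r'; simp only [hEdef]
    rw [hfun] at h2
    convert h2 using 1
    simp only [hAdef, hEdef]
    ring
  have hE2 : ∀ t r, HasDerivAt (fun r' => A t r') (μ * E t r) r := by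
    intro t r
    have hd1 : HasDerivAt (fun r' : ℝ => deriv (U t) (Real.exp r'))
        (deriv (deriv (U t)) (Real.exp r) * Real.exp r) r := by
      have h := ((hU'd t _ (Real.exp_pos r)).hasDerivAt).comp r (Real.hasDerivAt_exp r)
      simpa [Function.comp_def] using h
    have hprod : HasDerivAt (fun r' : ℝ => Real.exp r' * deriv (U t) (Real.exp r'))
        (Real.exp r * deriv (U t) (Real.exp r)
          + Real.exp r * (deriv (deriv (U t)) (Real.exp r) * Real.exp r)) r :=
      (Real.hasDerivAt_exp r).mul hd1
    have hmul := (hE1 t r).mul ((hprod.neg).div_const m)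
    have hfun : (fun r' : ℝ => E t r' * (-(Real.exp r' * deriv (U t) (Real.exp r')) / m))
        = fun r' => A t r' := by
      funext r'; simp only [hAdef]
    simp only [Pi.mul_def, Pi.neg_def] at hmul
    rw [hfun] at hmul
    replace hmul : HasDerivAt (fun r' => A t r') _ r := hmul
    convert hmul using 1
    have heq := E2 t (Real.exp r) (Real.exp_pos r)
    simp only [hAdef, hmudef]
    linear_combination (E t r / m) * heq
  have hEV : ∀ t r : ℝ, E t r = Real.exp (-(V r t) / m) := by
    intro t r; simp only [hEdef, hUdef, hVdef]
  set B : ℝ → ℝ → ℝ := fun r t => E t r * (-(deriv (V r) t) / m) with hBdef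
  have hB1 : ∀ r t, HasDerivAt (fun t' => E t' r) (B r t) t := by
    intro r t
    have h1 : HasDerivAt (fun t' : ℝ => -(V r t') / m) (-(deriv (V r) t) / m) t :=
      (((hVd r t).hasDerivAt).neg).div_const m
    have h2 := h1.exp
    have hfun : (fun t' : ℝ => Real.exp (-(V r t') / m)) = fun t' => E t' r := by
      funext t'; rw [hEV t' r]
    rw [hfun] at h2
    convert h2 using 1
  have hB2 : ∀ r t, HasDerivAt (fun t' => B r t') (ν * E t r) t := by
    intro r t
    have hd1 : HasDerivAt (deriv (V r)) (deriv (deriv (V r)) t) t := (hV'd r t).hasDerivAt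
    have hmul := (hB1 r t).mul ((hd1.neg).div_const m)
    have hfun : (fun t' : ℝ => E t' r * (-(deriv (V r) t') / m)) = fun t' => B r t' := by
      funext t'; simp only [hBdef]
    simp only [Pi.mul_def, Pi.neg_def] at hmul
    rw [hfun] at hmul
    replace hmul : HasDerivAt (fun t' => B r t') _ t := hmul
    convert hmul using 1
    have heq := E3 r t
    simp only [hBdef, hnudef]
    linear_combination (E t r / m) * heq
  -- the mixed derivative vanishes : B is independent of r
  have hconst : ∀ t r : ℝ, B r t = B 0 t := by
    intro t r
    have hder : ∀ r', HasDerivAt (fun y : ℝ => B y t) 0 r' := by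
      intro r'
      have hQ : HasDerivAt (fun s' : ℝ => partialT n f (Function.update x₀ L s', t))
          (deriv (fun s' : ℝ => partialT n f (Function.update x₀ L s', t)) (Real.exp r'))
          (Real.exp r') := (hQd t _ (Real.exp_pos r')).hasDerivAt
      have hQr : HasDerivAt (fun y : ℝ => partialT n f (Function.update x₀ L (Real.exp y), t))
          (deriv (fun s' : ℝ => partialT n f (Function.update x₀ L s', t)) (Real.exp r')
            * Real.exp r') r' := by
        have h := hQ.comp r' (Real.hasDerivAt_exp r')
        simpa [Function.comp_def] using h
      have hmul := (hE1 t r').mul ((hQr.neg).div_const m)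
      have hfun : (fun y : ℝ =>
          E t y * (-(partialT n f (Function.update x₀ L (Real.exp y), t)) / m))
          = fun y => B y t := by
        funext y
        simp only [hBdef, hPV]
      simp only [Pi.mul_def, Pi.neg_def] at hmul
      rw [hfun] at hmul
      replace hmul : HasDerivAt (fun y => B y t) _ r' := hmul
      convert hmul using 1
      rw [E6 t (Real.exp r') (Real.exp_pos r')]
      simp only [hAdef, hPV]
      field_simp
      ring
    have hd : Differentiable ℝ (fun y : ℝ => B y t) := fun y => (hder y).differentiableAt
    have h0 : ∀ y, deriv (fun y : ℝ => B y t) y = 0 := fun y => (hder y).deriv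
    exact is_const_of_deriv_eq_zero hd h0 r 0
  -- final contradiction
  have hmu0 : μ ≠ 0 := by
    rw [hmudef]
    intro h
    apply hc0
    have h1 : c / m = 0 := by linarith
    exact (div_eq_zero_iff.1 h1).resolve_right hm'
  by_cases hnu : ν = 0
  · have hlam0 : lam = 0 := by
      have h1 : lam / m = 0 := by rw [hnudef] at hnu; linarith
      exact (div_eq_zero_iff.1 h1).resolve_right hm'
    have hcpos : 0 < c := by rw [hcdef, hlam0]; linarith
    have hmuneg : μ < 0 := by
      rw [hmudef]
      have := div_pos hcpos hm
      linarith
    exact no_pos_sol μ hmuneg (fun r => E 0 r) (fun r => A 0 r)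
      (fun r => hE1 0 r) (fun r => hE2 0 r) (fun r => hEpos 0 r)
  · have hE_eq : ∀ t r : ℝ, E t r = E t 0 := by
      intro t r
      have h1 : (fun t' => B r t') = fun t' => B 0 t' := funext fun t' => hconst t' r
      have h2 : deriv (fun t' => B r t') t = deriv (fun t' => B 0 t') t := by rw [h1]
      rw [(hB2 r t).deriv, (hB2 0 t).deriv] at h2
      exact mul_left_cancel₀ hnu h2
    have hA0 : ∀ t r : ℝ, A t r = 0 := by
      intro t r
      have hconstE : (fun r' => E t r') = fun _ => E t 0 := funext (hE_eq t)
      have h := hE1 t r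
      rw [hconstE] at h
      have h2 := h.deriv
      rw [deriv_const] at h2
      exact h2.symm
    have h := hE2 0 0
    have hfun0 : (fun r' => A 0 r') = fun _ => (0:ℝ) := funext fun r' => hA0 0 r'
    rw [hfun0] at h
    have h2 := h.deriv
    rw [deriv_const] at h2
    exact (mul_ne_zero hmu0 (ne_of_gt (hEpos 0 0))) h2.symm
end

section
/- Let n ≥ 2 be an integer, m > 0 a real number, and ε ∈ {−1, +1}. Then the function f : {(x,t) ∈ ℝⁿ × ℝ : xₙ > 0} → ℝ defined by f(x,t) = ε·√((n−1)m)·t satisfies the quasi-Einstein PDE system for (f, m, λ) with λ = −(n−1). (In particular, (ℍⁿ × ℝ, g, ∇f, −(n−1)) is a quasi-Einstein metric whose potential gradient ∇f = ε·√((n−1)m)·∂ₜ is a Killing field, so Hess f = 0.) -/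
open Real

section TimeOnlyPotential

variable (n : ℕ)

theorem partialX_comp_snd (g : ℝ → ℝ) (i : Fin n) (p : (Fin n → ℝ) × ℝ) :
    partialX n (fun q => g q.2) i p = 0 :=
  deriv_const _ (g p.2)

theorem partialT_comp_snd (g : ℝ → ℝ) (p : (Fin n → ℝ) × ℝ) :
    partialT n (fun q => g q.2) p = deriv g p.2 :=
  rfl

/-- A potential depending on `t` alone has vanishing spatial Hessian, so the curvature term
`Ric = -(n-1)·g` of `ℍⁿ` forces `λ = -(n-1)` and the system collapses to one ODE in `t`. -/
theorem qeSystem_comp_snd (hn : 2 ≤ n) (m : ℝ) (g : ℝ → ℝ)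
    (hg : ∀ t, deriv (deriv g) t = (1 / m) * deriv g t ^ 2 - ((n : ℝ) - 1)) :
    QESystem n hn m (-((n : ℝ) - 1)) (fun q => g q.2) := by
  have hX : ∀ i, partialX n (fun q => g q.2) i = fun _ => 0 :=
    fun i => funext (partialX_comp_snd n g i)
  have hT : partialT n (fun q => g q.2) = fun q => deriv g q.2 :=
    funext (partialT_comp_snd n g)
  intro p _
  simp only [hX, hT, partialX_comp_snd n (fun _ => 0), partialX_comp_snd n (deriv g),
    partialT_comp_snd n (deriv g), hg]
  refine ⟨fun _ _ => ?_, ?_, ?_, fun _ _ _ _ => ?_, fun _ _ => ?_, fun _ => ?_⟩ <;> ring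

end TimeOnlyPotential

/-- **Example 1.** The function `f(x,t) = ε·√((n−1)m)·t` (with `ε = ±1`) satisfies the
quasi-Einstein PDE system on `ℍⁿ × ℝ` with `λ = −(n−1)`. -/
theorem linear_potential_is_quasiEinstein
    (n : ℕ) (hn : 2 ≤ n) (m : ℝ) (hm : 0 < m)
    (ε : ℝ) (hε : ε = -1 ∨ ε = 1) :
    QESystem n hn m (-((n : ℝ) - 1))
      (fun p : (Fin n → ℝ) × ℝ => ε * Real.sqrt (((n : ℝ) - 1) * m) * p.2) := by
  set c := ε * Real.sqrt (((n : ℝ) - 1) * m)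
  have hc : c ^ 2 = ((n : ℝ) - 1) * m := by
    have hn' : (1 : ℝ) ≤ n := by exact_mod_cast (by omega : 1 ≤ n)
    have hε2 : ε ^ 2 = 1 := by rcases hε with rfl | rfl <;> norm_num
    rw [mul_pow, hε2, one_mul, sq_sqrt (by nlinarith)]
  apply qeSystem_comp_snd n hn m (fun t => c * t)
  intro t
  have hderiv : deriv (fun t => c * t) = fun _ => c := funext fun _ => by simp
  rw [hderiv, deriv_const, hc]
  field_simp
  ring
end

section
/- Let m > 0 and λ < 0 be real numbers, set μ = √(−λ/m), and let h : ℝ → ℝ be a differentiable function satisfying h′(t) = h(t)²/m + λ for every t ∈ ℝ. Then either h is the constant function √(−mλ), or h is the constant function −√(−mλ), or there exists a constant a ∈ ℝ such that h(t) = −√(−mλ)·tanh(μ·t + a) for every t ∈ ℝ. -/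
/-!
The substitution `h = -m u'/u` with `u = exp (-(1/m) ∫₀ᵗ h) > 0` turns the Riccati equation into
`u'' = μ² u`, so `u = A e^{μt} + B e^{-μt}`. Positivity of `u` on all of `ℝ` forces `A, B ≥ 0`, and
the three solution families correspond to `A = 0`, `B = 0` and `A, B > 0`.
-/

open Real

theorem eq_mul_exp_of_hasDerivAt {k : ℝ} {v : ℝ → ℝ} (hv : ∀ t, HasDerivAt v (k * v t) t)
    (t : ℝ) : v t = v 0 * exp (k * t) := by
  have hd : ∀ s, HasDerivAt (fun s => v s * exp (-k * s)) 0 s := fun s =>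
    ((hv s).fun_mul ((hasDerivAt_id' s).const_mul (-k)).exp).congr_deriv (by ring)
  have hconst : v t * exp (-k * t) = v 0 := by
    simpa using is_const_of_deriv_eq_zero (fun s => (hd s).differentiableAt)
      (fun s => (hd s).deriv) t 0
  rw [← hconst, mul_assoc, ← exp_add, neg_mul, neg_add_cancel, exp_zero, mul_one]

/-- `u' ± μ u` solve first-order equations `v' = ± μ v`. -/
theorem exists_eq_mul_exp_add_mul_exp {μ : ℝ} (hμ : μ ≠ 0) {u u' : ℝ → ℝ}
    (hu : ∀ t, HasDerivAt u (u' t) t) (hu' : ∀ t, HasDerivAt u' (μ ^ 2 * u t) t) :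
    ∃ A B : ℝ, ∀ t, u t = A * exp (μ * t) + B * exp (-(μ * t)) ∧
      u' t = μ * (A * exp (μ * t) - B * exp (-(μ * t))) := by
  have hp := eq_mul_exp_of_hasDerivAt (k := μ) (v := fun t => u' t + μ * u t) fun t =>
    ((hu' t).fun_add ((hu t).const_mul μ)).congr_deriv (by ring)
  have hq := eq_mul_exp_of_hasDerivAt (k := -μ) (v := fun t => u' t - μ * u t) fun t =>
    ((hu' t).fun_sub ((hu t).const_mul μ)).congr_deriv (by ring)
  simp only [neg_mul] at hq
  refine ⟨(u' 0 + μ * u 0) / (2 * μ), -(u' 0 - μ * u 0) / (2 * μ), fun t => ⟨?_, ?_⟩⟩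
  · field_simp
    linear_combination hp t - hq t
  · field_simp
    linear_combination hp t + hq t

theorem nonneg_of_forall_pos_mul_exp_add {k a b : ℝ} (hk : k ≠ 0)
    (hpos : ∀ t, 0 < a * exp (k * t) + b) : 0 ≤ a := by
  by_contra! ha
  set x := max (b / -a) 0 + 1
  have hx : 0 < x := by positivity
  have hbx : b / -a < x := by simp only [x]; linarith [le_max_left (b / -a) 0]
  have := hpos (log x / k)
  rw [mul_div_cancel₀ _ hk, exp_log hx] at this
  rw [div_lt_iff₀ (neg_pos.mpr ha)] at hbx
  linarith

theorem nonneg_of_forall_pos_mul_exp_add_mul_exp {k a b : ℝ} (hk : k ≠ 0)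
    (hpos : ∀ t, 0 < a * exp (k * t) + b * exp (-(k * t))) : 0 ≤ a := by
  refine nonneg_of_forall_pos_mul_exp_add (b := b) (mul_ne_zero two_ne_zero hk) fun t => ?_
  have key : (a * exp (k * t) + b * exp (-(k * t))) * exp (k * t) = a * exp (2 * k * t) + b := by
    rw [add_mul, mul_assoc, mul_assoc, ← exp_add, ← exp_add, neg_add_cancel, exp_zero]
    ring_nf
  exact key ▸ mul_pos (hpos t) (exp_pos _)

noncomputable def expRatio (A B x : ℝ) : ℝ :=
  (A * exp x - B * exp (-x)) / (A * exp x + B * exp (-x))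

theorem expRatio_eq_tanh {A B : ℝ} (hA : 0 < A) (hB : 0 < B) (x : ℝ) :
    expRatio A B x = tanh (x + (log A - log B) / 2) := by
  set s := exp ((log A - log B) / 2)
  have hs : s ^ 2 = A / B := by
    rw [← exp_nat_mul, Nat.cast_ofNat, mul_div_cancel₀ _ two_ne_zero, exp_sub, exp_log hA,
      exp_log hB]
  have hs0 : 0 < s := exp_pos _
  have hx : 0 < exp x := exp_pos x
  rw [expRatio, tanh_eq, neg_add, exp_add, exp_add, exp_neg, exp_neg]
  field_simp
  rw [hs]
  field_simp

theorem expRatio_trichotomy {A B : ℝ} (hA : 0 ≤ A) (hB : 0 ≤ B) (hAB : 0 < A + B) :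
    (∀ x, expRatio A B x = -1) ∨ (∀ x, expRatio A B x = 1) ∨
      ∃ a, ∀ x, expRatio A B x = tanh (x + a) := by
  rcases hA.eq_or_lt with rfl | hA
  · have hB : 0 < B := by simpa using hAB
    left
    intro x
    have hne : B * exp (-x) ≠ 0 := by positivity
    simp [expRatio, neg_div_self hne]
  rcases hB.eq_or_lt with rfl | hB
  · right; left
    intro x
    have hne : A * exp x ≠ 0 := by positivity
    simp [expRatio, div_self hne]
  · exact Or.inr (Or.inr ⟨_, expRatio_eq_tanh hA hB⟩)

theorem exists_linearization_of_riccati {m lam : ℝ} (hm : m ≠ 0) {h : ℝ → ℝ}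
    (hdiff : Differentiable ℝ h) (hode : ∀ t, deriv h t = h t ^ 2 / m + lam) :
    ∃ u : ℝ → ℝ, (∀ t, 0 < u t) ∧ (∀ t, HasDerivAt u (-(h t / m) * u t) t) ∧
      ∀ t, HasDerivAt (fun s => -(h s / m) * u s) (-lam / m * u t) t := by
  set F : ℝ → ℝ := fun t => ∫ s in (0 : ℝ)..t, h s
  have hF : ∀ t, HasDerivAt F (h t) t := fun t =>
    (hdiff.continuous.integral_hasStrictDerivAt 0 t).hasDerivAt
  have hu : ∀ t, HasDerivAt (fun t => exp (-(F t / m))) (-(h t / m) * exp (-(F t / m))) t :=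
    fun t => ((hF t).div_const m).fun_neg.exp.congr_deriv (mul_comm _ _)
  refine ⟨fun t => exp (-(F t / m)), fun t => exp_pos _, hu, fun t => ?_⟩
  refine (((hdiff t).hasDerivAt.div_const m).fun_neg.fun_mul (hu t)).congr_deriv ?_
  rw [hode]
  field_simp
  ring

theorem exists_eq_expRatio_of_riccati {m lam μ : ℝ} (hm : m ≠ 0) (hμ : μ ≠ 0)
    (hμ2 : μ ^ 2 = -lam / m) {h : ℝ → ℝ} (hdiff : Differentiable ℝ h)
    (hode : ∀ t, deriv h t = h t ^ 2 / m + lam) :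
    ∃ A B : ℝ, 0 ≤ A ∧ 0 ≤ B ∧ 0 < A + B ∧ ∀ t, h t = -(m * μ) * expRatio A B (μ * t) := by
  obtain ⟨u, hupos, hu, hu'⟩ := exists_linearization_of_riccati hm hdiff hode
  obtain ⟨A, B, hAB⟩ := exists_eq_mul_exp_add_mul_exp hμ hu (hμ2 ▸ hu')
  have hpos : ∀ t, 0 < A * exp (μ * t) + B * exp (-(μ * t)) := fun t => (hAB t).1 ▸ hupos t
  refine ⟨A, B, nonneg_of_forall_pos_mul_exp_add_mul_exp hμ hpos,
    nonneg_of_forall_pos_mul_exp_add_mul_exp (b := A) (neg_ne_zero.mpr hμ) fun t => ?_,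
    by simpa using hpos 0, fun t => ?_⟩
  · simpa only [neg_mul, neg_neg, add_comm] using hpos t
  · obtain ⟨hut, hu't⟩ := hAB t
    rw [expRatio, ← hut]
    have hu0 := (hupos t).ne'
    field_simp at hu't ⊢
    linear_combination -hu't

/-- **Classification of global solutions of the Riccati ODE `h′ = h²/m + λ`, `λ < 0`.**
Every differentiable `h : ℝ → ℝ` with `h′(t) = h(t)²/m + λ` everywhere is either the
constant `√(−mλ)`, the constant `−√(−mλ)`, or `h(t) = −√(−mλ)·tanh(μ·t + a)` with
`μ = √(−λ/m)` and some constant `a`. -/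
theorem riccati_global_solutions_classification
    (m lam : ℝ) (hm : 0 < m) (hlam : lam < 0)
    (μ : ℝ) (hμ : μ = Real.sqrt (-lam / m))
    (h : ℝ → ℝ) (hdiff : Differentiable ℝ h)
    (hode : ∀ t : ℝ, deriv h t = h t ^ 2 / m + lam) :
    (∀ t : ℝ, h t = Real.sqrt (-m * lam)) ∨
    (∀ t : ℝ, h t = -Real.sqrt (-m * lam)) ∨
    (∃ a : ℝ, ∀ t : ℝ, h t = -Real.sqrt (-m * lam) * Real.tanh (μ * t + a)) := by
  have hpos : 0 < -lam / m := div_pos (neg_pos.mpr hlam) hm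
  have hμ0 : μ ≠ 0 := hμ ▸ (sqrt_pos.mpr hpos).ne'
  have hμ2 : μ ^ 2 = -lam / m := hμ ▸ sq_sqrt hpos.le
  have hc : sqrt (-m * lam) = m * μ := by
    rw [show -m * lam = m ^ 2 * (-lam / m) by field_simp, sqrt_mul (sq_nonneg m), sqrt_sq hm.le,
      hμ]
  obtain ⟨A, B, hA, hB, hAB, hh⟩ := exists_eq_expRatio_of_riccati hm.ne' hμ0 hμ2 hdiff hode
  rcases expRatio_trichotomy hA hB hAB with hr | hr | ⟨a, hr⟩
  · exact Or.inl fun t => by rw [hh, hr, hc]; ring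
  · exact Or.inr (Or.inl fun t => by rw [hh, hr, hc]; ring)
  · exact Or.inr (Or.inr ⟨a, fun t => by rw [hh, hr, hc, neg_mul]⟩)
end

section
/- Let m > 0 be a real number and let h : ℝ → ℝ be a differentiable function satisfying h′(t) = h(t)²/m for every t ∈ ℝ. Then h is identically zero. -/
/-!
Since `h' = h²/m ≥ 0`, `h` is monotone, so if `h t₀ ≠ 0` then `h` keeps the sign of `h t₀` on
the interval between `t₀` and `T = t₀ + m / h t₀`. There `1/h` has derivative `-1/m`, so
`1/h T = 1/h t₀ - (T - t₀)/m = 0`, which is impossible.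
-/

open Set

theorem HasDerivAt.inv_of_sq_div {h : ℝ → ℝ} {m t : ℝ} (hm : m ≠ 0)
    (hh : HasDerivAt h (h t ^ 2 / m) t) (ht : h t ≠ 0) :
    HasDerivAt (fun s => (h s)⁻¹) (-m⁻¹) t :=
  (hh.inv ht).congr_deriv (by field_simp)

theorem inv_sub_inv_eq_of_hasDerivAt_sq_div {h : ℝ → ℝ} {m a b : ℝ} (hm : m ≠ 0)
    (hh : ∀ s ∈ uIcc a b, HasDerivAt h (h s ^ 2 / m) s ∧ h s ≠ 0) :
    (h b)⁻¹ - (h a)⁻¹ = -(b - a) / m := by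
  have hint := intervalIntegral.integral_eq_sub_of_hasDerivAt
    (fun s hs => (hh s hs).1.inv_of_sq_div hm (hh s hs).2) intervalIntegrable_const
  rw [← hint, intervalIntegral.integral_const, smul_eq_mul]
  ring

theorem Monotone.apply_ne_zero_of_mem_uIcc {h : ℝ → ℝ} (hmono : Monotone h) {a b : ℝ}
    (ha : h a ≠ 0) (hab : 0 ≤ (b - a) * h a) : ∀ s ∈ uIcc a b, h s ≠ 0 := by
  intro s hs
  rcases ha.lt_or_gt with hneg | hpos
  · have hba : b ≤ a := by nlinarith
    rw [uIcc_of_ge hba] at hs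
    exact (lt_of_le_of_lt (hmono hs.2) hneg).ne
  · have hle : a ≤ b := by nlinarith
    rw [uIcc_of_le hle] at hs
    exact (lt_of_lt_of_le hpos (hmono hs.1)).ne'

/-- For `m > 0`, the only globally defined differentiable solution of `h′ = h²/m` on all
of `ℝ` is the zero function. -/
theorem global_riccati_solution_of_zero_lambda_is_zero
    (m : ℝ) (hm : 0 < m)
    (h : ℝ → ℝ) (hdiff : Differentiable ℝ h)
    (hode : ∀ t : ℝ, deriv h t = h t ^ 2 / m) :
    ∀ t : ℝ, h t = 0 := by
  intro t₀
  by_contra h0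
  set T := t₀ + m / h t₀ with hT
  have hmono : Monotone h :=
    monotone_of_deriv_nonneg hdiff fun t => hode t ▸ by positivity
  have hne : ∀ s ∈ uIcc t₀ T, h s ≠ 0 := hmono.apply_ne_zero_of_mem_uIcc h0 (by
    rw [hT, add_sub_cancel_left, div_mul_cancel₀ m h0]; exact hm.le)
  have hinv := inv_sub_inv_eq_of_hasDerivAt_sq_div hm.ne' fun s hs =>
    ⟨hode s ▸ (hdiff s).hasDerivAt, hne s hs⟩
  have hT0 : (h T)⁻¹ = 0 := by
    have hslope : -(T - t₀) / m = -(h t₀)⁻¹ := by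
      rw [hT]
      field_simp
      ring
    linarith
  exact hne T right_mem_uIcc (inv_eq_zero.mp hT0)
end

section
/- Let m > 0 and λ < 0 be real numbers, and let h : ℝ → ℝ be a differentiable function satisfying h′(t) = h(t)²/m + λ for every t ∈ ℝ. Then |h(t)| ≤ √(−mλ) for every t ∈ ℝ. -/
/-! Write `a = √(−mλ)`, so that `h′ = (h² − a²)/m`. If `h(t₀) = b > a`, then `h′ > 0` on the level
`h = b`, so `h ≥ b` for all `t ≥ t₀`; there `h′ ≥ c h²` with `c = (b² − a²)/(m b²) > 0`, so `1/h`
decreases with slope at most `−c` and must vanish before time `t₀ + 1/(c b)`, which is absurd.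
The lower bound follows by applying this to `t ↦ −h(−t)`, which solves the same equation. -/

open Set

lemma le_of_deriv_pos_at_level {f : ℝ → ℝ} {b t₀ t : ℝ} (hf : Differentiable ℝ f)
    (hlevel : ∀ s ≥ t₀, f s = b → 0 < deriv f s) (h₀ : b ≤ f t₀) (ht : t₀ ≤ t) : b ≤ f t := by
  have key := image_le_of_deriv_right_lt_deriv_boundary (f := fun s => -f s)
    (f' := fun s => -deriv f s) (B := fun _ => -b) (B' := 0)
    hf.continuous.neg.continuousOn
    (fun s _ => (hf s).hasDerivAt.neg.hasDerivWithinAt) (neg_le_neg h₀)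
    (fun _ => hasDerivAt_const _ _)
    (fun s hs hfs => neg_neg_iff_pos.mpr (hlevel s hs.1 (neg_inj.mp hfs)))
    ⟨ht, le_rfl⟩
  exact neg_le_neg_iff.mp key

lemma not_forall_pos_of_mul_sq_le_deriv {f : ℝ → ℝ} {c t₀ : ℝ} (hc : 0 < c)
    (hf : Differentiable ℝ f) (hderiv : ∀ t ≥ t₀, c * f t ^ 2 ≤ deriv f t) :
    ¬ ∀ t ≥ t₀, 0 < f t := by
  intro hpos
  have hinv : ∀ t ≥ t₀, HasDerivAt (fun s => (f s)⁻¹) (-deriv f t / f t ^ 2) t :=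
    fun t ht => (hf t).hasDerivAt.inv (hpos t ht).ne'
  have hslope : ∀ t ∈ interior (Ici t₀), deriv (fun s => (f s)⁻¹) t ≤ -c := by
    intro t ht
    rw [interior_Ici] at ht
    have hft := hpos t ht.le
    rw [(hinv t ht.le).deriv, le_neg, ← neg_div, neg_neg, le_div_iff₀ (by positivity)]
    exact hderiv t ht.le
  set T := t₀ + (f t₀)⁻¹ / c
  have hT : t₀ ≤ T := le_add_of_nonneg_right (by have := hpos t₀ le_rfl; positivity)
  have hdecay := (convex_Ici t₀).image_sub_le_mul_sub_of_deriv_le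
    (fun t ht => (hinv t ht).continuousAt.continuousWithinAt)
    (fun t ht => (hinv t (interior_subset ht)).differentiableAt.differentiableWithinAt)
    hslope t₀ (mem_Ici.mpr le_rfl) T hT hT
  have hT_sub : T - t₀ = (f t₀)⁻¹ / c := by ring
  rw [hT_sub, neg_mul, mul_div_cancel₀ _ hc.ne'] at hdecay
  linarith [inv_pos.mpr (hpos T hT)]

section Riccati

variable {m lam : ℝ} {h : ℝ → ℝ}

lemma le_sqrt_of_riccati (hm : 0 < m) (hlam : lam < 0) (hdiff : Differentiable ℝ h)
    (hode : ∀ t, deriv h t = h t ^ 2 / m + lam) (t₀ : ℝ) : h t₀ ≤ Real.sqrt (-m * lam) := by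
  by_contra! hgt
  set a := Real.sqrt (-m * lam)
  set b := h t₀
  have ha : a ^ 2 = -m * lam := Real.sq_sqrt (by nlinarith)
  have hb : 0 < b := (Real.sqrt_nonneg _).trans_lt hgt
  have hab : a ^ 2 < b ^ 2 := pow_lt_pow_left₀ hgt (Real.sqrt_nonneg _) two_ne_zero
  have hode' : ∀ t, deriv h t = (h t ^ 2 - a ^ 2) / m := fun t => by
    rw [hode, ha]; field_simp; ring
  have hstay : ∀ t ≥ t₀, b ≤ h t := fun t =>
    le_of_deriv_pos_at_level hdiff
      (fun s _ hs => by rw [hode', hs]; exact div_pos (by linarith) hm) le_rfl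
  refine not_forall_pos_of_mul_sq_le_deriv (c := (b ^ 2 - a ^ 2) / (m * b ^ 2))
    (div_pos (by linarith) (by positivity)) hdiff (fun t ht => ?_)
    (fun t ht => hb.trans_le (hstay t ht))
  have hsq : b ^ 2 ≤ h t ^ 2 := pow_le_pow_left₀ hb.le (hstay t ht) 2
  rw [hode', div_mul_eq_mul_div, div_le_div_iff₀ (by positivity) hm]
  nlinarith [mul_le_mul_of_nonneg_left hsq (sq_nonneg a)]

lemma deriv_neg_comp_neg_of_riccati (hode : ∀ t, deriv h t = h t ^ 2 / m + lam) (t : ℝ) :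
    deriv (fun s => -h (-s)) t = (-h (-t)) ^ 2 / m + lam := by
  rw [deriv.fun_neg, deriv_comp_neg, neg_neg, hode, neg_sq]

end Riccati

/-- Any global differentiable solution of `h′ = h²/m + λ` with `m > 0`, `λ < 0` satisfies
`|h(t)| ≤ √(−mλ)` for every `t`. -/
theorem global_riccati_solution_bounded
    (m lam : ℝ) (hm : 0 < m) (hlam : lam < 0)
    (h : ℝ → ℝ) (hdiff : Differentiable ℝ h)
    (hode : ∀ t : ℝ, deriv h t = h t ^ 2 / m + lam) :
    ∀ t : ℝ, |h t| ≤ Real.sqrt (-m * lam) := by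
  intro t
  refine abs_le.mpr ⟨?_, le_sqrt_of_riccati hm hlam hdiff hode t⟩
  have := le_sqrt_of_riccati (h := fun s => -h (-s)) hm hlam
    (hdiff.comp differentiable_neg).neg (deriv_neg_comp_neg_of_riccati hode) (-t)
  rw [neg_neg] at this
  linarith
end

section
/- Let n ≥ 2 be an integer, m > 0 and λ < 0 real numbers, set μ = √(−λ/m), let a : {x ∈ ℝⁿ : xₙ > 0} → ℝ be a function, and let f : {(x,t) ∈ ℝⁿ × ℝ : xₙ > 0} → ℝ be a smooth function such that ∂f/∂t(x,t) = −√(−mλ)·tanh(μ·t + a(x)) for every point, and such that ∂²f/∂xᵢ∂t = (1/m)·(∂f/∂xᵢ)·(∂f/∂t) holds at every point for each i ≤ n. Then a is a constant function, and ∂f/∂xᵢ ≡ 0 for every i ≤ n, i.e. f depends only on t. -/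
open Real

section AuxLemmas
open Filter Topology Set


private lemma myF_tanh (y : ℝ) :
    (1/2 : ℝ) * Real.log ((1 + Real.tanh y) / (1 - Real.tanh y)) = y := by
  have hc : (0:ℝ) < Real.cosh y := Real.cosh_pos y
  have h1 : 1 + Real.tanh y = Real.exp y / Real.cosh y := by
    rw [Real.tanh_eq_sinh_div_cosh, ← Real.cosh_add_sinh]
    field_simp
  have h2 : 1 - Real.tanh y = Real.exp (-y) / Real.cosh y := by
    rw [Real.tanh_eq_sinh_div_cosh, ← Real.cosh_sub_sinh]
    field_simp
  have h3 : (1 + Real.tanh y) / (1 - Real.tanh y) = Real.exp (2*y) := by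
    rw [h1, h2]
    rw [div_div_div_comm, div_self hc.ne', div_one, ← Real.exp_sub]
    ring_nf
  rw [h3, Real.log_exp]; ring

private lemma myF_hasDeriv : ∃ d : ℝ,
    HasDerivAt (fun u : ℝ => (1/2 : ℝ) * Real.log ((1 + u) / (1 - u))) d 0 := by
  have h1 : HasDerivAt (fun u : ℝ => 1 + u) 1 0 := by
    simpa using (hasDerivAt_id (0:ℝ)).const_add 1
  have h2 : HasDerivAt (fun u : ℝ => 1 - u) (-1) 0 := by
    simpa using (hasDerivAt_id (0:ℝ)).const_sub 1
  have h3 := h1.div h2 (by norm_num)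
  have h4 := h3.log (by norm_num)
  exact ⟨_, h4.const_mul (1/2 : ℝ)⟩

private lemma hasDerivAt_updateLine (n : ℕ) (x : Fin n → ℝ) (i : Fin n) (t s : ℝ) :
    HasDerivAt (fun s' : ℝ => ((Function.update x i s' : Fin n → ℝ), t))
      ((Pi.single i 1 : Fin n → ℝ), (0:ℝ)) s := by
  refine HasDerivAt.prodMk ?_ (hasDerivAt_const s t)
  rw [hasDerivAt_pi]
  intro j
  by_cases hj : j = i
  · subst hj
    simp only [Function.update_self, Pi.single_eq_same]
    exact hasDerivAt_id s
  · simp only [Function.update_of_ne hj, Pi.single_eq_of_ne hj]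
    exact hasDerivAt_const s (x j)

private lemma partialX_eq_fderiv (n : ℕ) (f : (Fin n → ℝ) × ℝ → ℝ)
    (i : Fin n) (p : (Fin n → ℝ) × ℝ) (hdf : DifferentiableAt ℝ f p) :
    partialX n f i p = fderiv ℝ f p ((Pi.single i 1 : Fin n → ℝ), (0:ℝ)) := by
  have hl := hasDerivAt_updateLine n p.1 i p.2 (p.1 i)
  have hdf' : HasFDerivAt f (fderiv ℝ f p)
      ((Function.update p.1 i (p.1 i) : Fin n → ℝ), p.2) := by
    rw [Function.update_eq_self]; exact hdf.hasFDerivAt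
  exact (hdf'.comp_hasDerivAt (p.1 i) hl).deriv

private lemma partialT_eq_fderiv (n : ℕ) (f : (Fin n → ℝ) × ℝ → ℝ)
    (p : (Fin n → ℝ) × ℝ) (hdf : DifferentiableAt ℝ f p) :
    partialT n f p = fderiv ℝ f p ((0 : Fin n → ℝ), (1:ℝ)) := by
  have hl : HasDerivAt (fun s : ℝ => ((p.1 : Fin n → ℝ), s)) ((0 : Fin n → ℝ), (1:ℝ)) p.2 :=
    (hasDerivAt_const p.2 p.1).prodMk (hasDerivAt_id p.2)
  exact (hdf.hasFDerivAt.comp_hasDerivAt p.2 hl).deriv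

private lemma isOpen_halfspace (n : ℕ) (hn : 2 ≤ n) :
    IsOpen {p : (Fin n → ℝ) × ℝ | 0 < p.1 (lastIdx n hn)} :=
  isOpen_lt continuous_const ((continuous_apply _).comp continuous_fst)

private lemma key_deriv
    (n : ℕ) (hn : 2 ≤ n) (m lam : ℝ) (hm : 0 < m) (hlam : lam < 0)
    (μ : ℝ) (hμ : μ = Real.sqrt (-lam / m))
    (a : (Fin n → ℝ) → ℝ)
    (f : (Fin n → ℝ) × ℝ → ℝ)
    (hf : ContDiffOn ℝ (⊤ : ℕ∞) f {p : (Fin n → ℝ) × ℝ | 0 < p.1 (lastIdx n hn)})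
    (ht : ∀ p : (Fin n → ℝ) × ℝ, 0 < p.1 (lastIdx n hn) →
      partialT n f p = -Real.sqrt (-m * lam) * Real.tanh (μ * p.2 + a p.1))
    (hmix : ∀ p : (Fin n → ℝ) × ℝ, 0 < p.1 (lastIdx n hn) → ∀ i : Fin n,
      partialX n (partialT n f) i p = (1 / m) * partialX n f i p * partialT n f p)
    (x : Fin n → ℝ) (i : Fin n) (s : ℝ)
    (hxs : 0 < Function.update x i s (lastIdx n hn)) :
    HasDerivAt (fun s' => a (Function.update x i s')) 0 s := by
  set S := {p : (Fin n → ℝ) × ℝ | 0 < p.1 (lastIdx n hn)} with hS_def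
  have hS : IsOpen S := isOpen_halfspace n hn
  have hμpos : 0 < μ := by
    rw [hμ]; exact Real.sqrt_pos.mpr (div_pos (by linarith) hm)
  have hsq : 0 < Real.sqrt (-m * lam) := Real.sqrt_pos.mpr (by nlinarith)
  set y := Function.update x i s with hy
  set t0 := -(a y) / μ with ht0
  have hzero : μ * t0 + a y = 0 := by rw [ht0]; field_simp; ring
  set p : (Fin n → ℝ) × ℝ := (y, t0) with hp_def
  have hp : p ∈ S := hxs
  -- differentiability of partialT f along the coordinate line
  have hfd : ContDiffOn ℝ (⊤ : ℕ∞) (fderiv ℝ f) S := hf.fderiv_of_isOpen hS (by simp)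
  have h1 : DifferentiableAt ℝ (fderiv ℝ f) p :=
    (hfd.contDiffAt (hS.mem_nhds hp)).differentiableAt (by simp)
  have hTdiff : DifferentiableAt ℝ
      (fun q : (Fin n → ℝ) × ℝ => fderiv ℝ f q ((0 : Fin n → ℝ), (1:ℝ))) p :=
    h1.clm_apply (differentiableAt_const _)
  have hL : HasDerivAt (fun s' : ℝ => ((Function.update x i s' : Fin n → ℝ), t0))
      ((Pi.single i 1 : Fin n → ℝ), (0:ℝ)) s := hasDerivAt_updateLine n x i t0 s
  have hLs : (fun s' : ℝ => ((Function.update x i s' : Fin n → ℝ), t0)) s = p := rfl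
  have hLd : DifferentiableAt ℝ
      (fun s' : ℝ => fderiv ℝ f ((Function.update x i s' : Fin n → ℝ), t0)
        ((0 : Fin n → ℝ), (1:ℝ))) s :=
    DifferentiableAt.comp (g := fun q : (Fin n → ℝ) × ℝ => fderiv ℝ f q ((0 : Fin n → ℝ), (1:ℝ))) s hTdiff hL.differentiableAt
  have hmem : ∀ᶠ s' in 𝓝 s,
      ((Function.update x i s' : Fin n → ℝ), t0) ∈ S :=
    hL.continuousAt.preimage_mem_nhds (hS.mem_nhds hp)
  have hEv1 : (fun s' : ℝ => partialT n f ((Function.update x i s' : Fin n → ℝ), t0))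
      =ᶠ[𝓝 s] (fun s' : ℝ => fderiv ℝ f ((Function.update x i s' : Fin n → ℝ), t0)
        ((0 : Fin n → ℝ), (1:ℝ))) := by
    filter_upwards [hmem] with s' hs'
    exact partialT_eq_fderiv n f _ ((hf.contDiffAt (hS.mem_nhds hs')).differentiableAt (by simp))
  have hPTdiff : DifferentiableAt ℝ
      (fun s' : ℝ => partialT n f ((Function.update x i s' : Fin n → ℝ), t0)) s :=
    hLd.congr_of_eventuallyEq hEv1
  -- the mixed equation at p gives deriv = 0
  have hPTp : partialT n f p = 0 := by
    rw [ht p hp]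
    have h0 : μ * p.2 + a p.1 = 0 := hzero
    rw [h0, Real.tanh_zero, mul_zero]
  have hmix' := hmix p hp i
  rw [hPTp, mul_zero] at hmix'
  have hd0 : deriv (fun s' : ℝ =>
      partialT n f ((Function.update x i s' : Fin n → ℝ), t0)) s = 0 := by
    unfold partialX at hmix'
    simp only [hp_def, hy, Function.update_idem, Function.update_self] at hmix'
    exact hmix'
  have hPT0 : HasDerivAt (fun s' : ℝ =>
      partialT n f ((Function.update x i s' : Fin n → ℝ), t0)) 0 s := by
    have h := hPTdiff.hasDerivAt
    rwa [hd0] at h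
  -- the tanh function has derivative 0
  have hEv2 : (fun s' : ℝ => Real.tanh (μ * t0 + a (Function.update x i s')))
      =ᶠ[𝓝 s] (fun s' : ℝ => (-Real.sqrt (-m * lam))⁻¹ *
        partialT n f ((Function.update x i s' : Fin n → ℝ), t0)) := by
    filter_upwards [hmem] with s' hs'
    rw [ht _ hs']
    rw [inv_mul_cancel_left₀ (by exact neg_ne_zero.mpr hsq.ne')]
  have hψ : HasDerivAt (fun s' : ℝ => Real.tanh (μ * t0 + a (Function.update x i s'))) 0 s := by
    have h := hPT0.const_mul ((-Real.sqrt (-m * lam))⁻¹)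
    rw [mul_zero] at h
    exact h.congr_of_eventuallyEq hEv2
  have hψs0 : Real.tanh (μ * t0 + a (Function.update x i s)) = 0 := by
    rw [← hy, hzero, Real.tanh_zero]
  obtain ⟨d, hF⟩ := myF_hasDeriv
  rw [← hψs0] at hF
  have hcomp := hF.comp s hψ
  have hfinal := hcomp.sub_const (μ * t0)
  have heq : (fun s' : ℝ => ((fun u : ℝ => (1/2 : ℝ) * Real.log ((1 + u) / (1 - u))) ∘
      fun s' : ℝ => Real.tanh (μ * t0 + a (Function.update x i s'))) s' - μ * t0)
      = fun s' : ℝ => a (Function.update x i s') := by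
    funext s'
    simp only [Function.comp_apply, myF_tanh]
    ring
  rw [heq] at hfinal
  simpa using hfinal

section Const

variable {n : ℕ} {hn : 2 ≤ n} {m lam : ℝ} {μ : ℝ}
  {a : (Fin n → ℝ) → ℝ} {f : (Fin n → ℝ) × ℝ → ℝ}

private lemma const_line
    (n : ℕ) (hn : 2 ≤ n) (m lam : ℝ) (hm : 0 < m) (hlam : lam < 0)
    (μ : ℝ) (hμ : μ = Real.sqrt (-lam / m))
    (a : (Fin n → ℝ) → ℝ)
    (f : (Fin n → ℝ) × ℝ → ℝ)
    (hf : ContDiffOn ℝ (⊤ : ℕ∞) f {p : (Fin n → ℝ) × ℝ | 0 < p.1 (lastIdx n hn)})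
    (ht : ∀ p : (Fin n → ℝ) × ℝ, 0 < p.1 (lastIdx n hn) →
      partialT n f p = -Real.sqrt (-m * lam) * Real.tanh (μ * p.2 + a p.1))
    (hmix : ∀ p : (Fin n → ℝ) × ℝ, 0 < p.1 (lastIdx n hn) → ∀ i : Fin n,
      partialX n (partialT n f) i p = (1 / m) * partialX n f i p * partialT n f p)
    (x : Fin n → ℝ) (hx : 0 < x (lastIdx n hn)) (i : Fin n) (s : ℝ)
    (hs : 0 < Function.update x i s (lastIdx n hn)) :
    a (Function.update x i s) = a x := by
  by_cases hil : i = lastIdx n hn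
  · rw [hil, Function.update_self] at hs
    -- g has zero derivative on (0, ∞)
    have hg : ∀ z : ℝ, 0 < z → HasDerivAt (fun s' => a (Function.update x i s')) 0 z := by
      intro z hz
      refine key_deriv n hn m lam hm hlam μ hμ a f hf ht hmix x i z ?_
      rw [hil, Function.update_self]; exact hz
    have hxi : 0 < x i := by rw [hil]; exact hx
    rcases eq_or_ne s (x i) with h | h
    · rw [h, Function.update_eq_self]
    · set lo := min s (x i) with hlo
      set hi := max s (x i) with hhi
      have hlopos : 0 < lo := lt_min hs hxi
      have hlohi : lo < hi := by
        rcases lt_or_gt_of_ne h with h' | h'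
        · rw [hlo, hhi, min_eq_left h'.le, max_eq_right h'.le]; exact h'
        · rw [hlo, hhi, min_eq_right h'.le, max_eq_left h'.le]; exact h'
      have hdiff : DifferentiableOn ℝ (fun s' => a (Function.update x i s')) (Icc lo hi) :=
        fun z hz => ((hg z (lt_of_lt_of_le hlopos hz.1)).differentiableAt).differentiableWithinAt
      have hderiv : ∀ z ∈ Ico lo hi,
          derivWithin (fun s' => a (Function.update x i s')) (Icc lo hi) z = 0 := by
        intro z hz
        exact ((hg z (lt_of_lt_of_le hlopos hz.1)).hasDerivWithinAt).derivWithin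
          (uniqueDiffOn_Icc hlohi z ⟨hz.1, hz.2.le⟩)
      have hconst := constant_of_derivWithin_zero hdiff hderiv
      have h1 := hconst s ⟨min_le_left _ _, le_max_left _ _⟩
      have h2 := hconst (x i) ⟨min_le_right _ _, le_max_right _ _⟩
      rw [Function.update_eq_self] at h2
      rw [h1, ← h2]
  · -- i ≠ lastIdx: the last coordinate is untouched
    have hg : ∀ z : ℝ, HasDerivAt (fun s' => a (Function.update x i s')) 0 z := by
      intro z
      refine key_deriv n hn m lam hm hlam μ hμ a f hf ht hmix x i z ?_
      rw [Function.update_of_ne (fun hc => hil hc.symm)]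
      exact hx
    have hconst := is_const_of_deriv_eq_zero (f := fun s' => a (Function.update x i s'))
      (fun z => (hg z).differentiableAt) (fun z => (hg z).deriv) s (x i)
    rwa [Function.update_eq_self] at hconst

end Const

private lemma const_a
    (n : ℕ) (hn : 2 ≤ n) (m lam : ℝ) (hm : 0 < m) (hlam : lam < 0)
    (μ : ℝ) (hμ : μ = Real.sqrt (-lam / m))
    (a : (Fin n → ℝ) → ℝ)
    (f : (Fin n → ℝ) × ℝ → ℝ)
    (hf : ContDiffOn ℝ (⊤ : ℕ∞) f {p : (Fin n → ℝ) × ℝ | 0 < p.1 (lastIdx n hn)})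
    (ht : ∀ p : (Fin n → ℝ) × ℝ, 0 < p.1 (lastIdx n hn) →
      partialT n f p = -Real.sqrt (-m * lam) * Real.tanh (μ * p.2 + a p.1))
    (hmix : ∀ p : (Fin n → ℝ) × ℝ, 0 < p.1 (lastIdx n hn) → ∀ i : Fin n,
      partialX n (partialT n f) i p = (1 / m) * partialX n f i p * partialT n f p)
    (x yv : Fin n → ℝ) (hx : 0 < x (lastIdx n hn)) (hy : 0 < yv (lastIdx n hn)) :
    a x = a yv := by
  have step : ∀ k : ℕ, k ≤ n →
      a (fun j : Fin n => if (j : ℕ) < k then yv j else x j) = a x := by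
    intro k
    induction k with
    | zero =>
      intro _
      congr 1
    | succ k ih =>
      intro hk1
      have hk : k ≤ n := by omega
      have hkn : k < n := by omega
      set i : Fin n := ⟨k, hkn⟩ with hi_def
      have hik : (i : ℕ) = k := rfl
      have hzk : (fun j : Fin n => if (j : ℕ) < k + 1 then yv j else x j)
          = Function.update (fun j : Fin n => if (j : ℕ) < k then yv j else x j) i (yv i) := by
        funext j
        rcases eq_or_ne j i with rfl | hj
        · rw [Function.update_self, if_pos (by omega)]
        · rw [Function.update_of_ne hj]
          have hjk : (j : ℕ) ≠ k := fun hc => hj (Fin.ext hc)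
          by_cases h2 : (j : ℕ) < k
          · rw [if_pos (by omega), if_pos h2]
          · rw [if_neg (by omega), if_neg h2]
      have hlastlt : ¬ ((lastIdx n hn : ℕ) < k) := by
        simp only [lastIdx]
        omega
      have hpos1 : 0 < (fun j : Fin n => if (j : ℕ) < k then yv j else x j) (lastIdx n hn) := by
        simp only [hlastlt, if_false]
        exact hx
      have hpos2 : 0 < Function.update
          (fun j : Fin n => if (j : ℕ) < k then yv j else x j) i (yv i) (lastIdx n hn) := by
        rw [← hzk]
        by_cases hl : ((lastIdx n hn : ℕ) < k + 1)
        · simp only [hl, if_true]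
          exact hy
        · simp only [hl, if_false]
          exact hx
      rw [hzk,
        const_line n hn m lam hm hlam μ hμ a f hf ht hmix _ hpos1 i (yv i) hpos2]
      exact ih hk
  have hn' := step n le_rfl
  have hyy : (fun j : Fin n => if (j : ℕ) < n then yv j else x j) = yv := by
    funext j
    simp [j.isLt]
  rw [hyy] at hn'
  exact hn'.symm

end AuxLemmas

open Filter Topology Set

/-- If `∂f/∂t(x,t) = −√(−mλ)·tanh(μ·t + a(x))` with `μ = √(−λ/m)` and the mixed equation
`∂²f/∂xᵢ∂t = (1/m)·(∂f/∂xᵢ)·(∂f/∂t)` holds on the half-space, then `a` is constant and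
all spatial partial derivatives of `f` vanish, i.e. `f` depends only on `t`. -/
theorem tanh_time_derivative_forces_space_independence
    (n : ℕ) (hn : 2 ≤ n) (m lam : ℝ) (hm : 0 < m) (hlam : lam < 0)
    (μ : ℝ) (hμ : μ = Real.sqrt (-lam / m))
    (a : (Fin n → ℝ) → ℝ)
    (f : (Fin n → ℝ) × ℝ → ℝ)
    (hf : ContDiffOn ℝ (⊤ : ℕ∞) f {p : (Fin n → ℝ) × ℝ | 0 < p.1 (lastIdx n hn)})
    (ht : ∀ p : (Fin n → ℝ) × ℝ, 0 < p.1 (lastIdx n hn) →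
      partialT n f p = -Real.sqrt (-m * lam) * Real.tanh (μ * p.2 + a p.1))
    (hmix : ∀ p : (Fin n → ℝ) × ℝ, 0 < p.1 (lastIdx n hn) → ∀ i : Fin n,
      partialX n (partialT n f) i p = (1 / m) * partialX n f i p * partialT n f p) :
    (∀ x y : Fin n → ℝ, 0 < x (lastIdx n hn) → 0 < y (lastIdx n hn) → a x = a y) ∧
    (∀ p : (Fin n → ℝ) × ℝ, 0 < p.1 (lastIdx n hn) → ∀ i : Fin n,
      partialX n f i p = 0) := by
  have haconst : ∀ x y : Fin n → ℝ, 0 < x (lastIdx n hn) → 0 < y (lastIdx n hn) →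
      a x = a y := fun x y hx hy => const_a n hn m lam hm hlam μ hμ a f hf ht hmix x y hx hy
  refine ⟨haconst, ?_⟩
  intro p hp i
  set S := {q : (Fin n → ℝ) × ℝ | 0 < q.1 (lastIdx n hn)} with hS_def
  have hS : IsOpen S := isOpen_halfspace n hn
  have hμpos : 0 < μ := by
    rw [hμ]; exact Real.sqrt_pos.mpr (div_pos (by linarith) hm)
  have hsq : 0 < Real.sqrt (-m * lam) := Real.sqrt_pos.mpr (by nlinarith)
  -- at every time with nonvanishing tanh, the spatial derivative vanishes
  have hPX0 : ∀ t' : ℝ, μ * t' + a p.1 ≠ 0 → partialX n f i (p.1, t') = 0 := by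
    intro t' hne
    have hq : ((p.1, t') : (Fin n → ℝ) × ℝ) ∈ S := hp
    have hmix' := hmix (p.1, t') hq i
    have hL := hasDerivAt_updateLine n p.1 i t' (p.1 i)
    have hmem : ∀ᶠ s' in 𝓝 (p.1 i),
        ((Function.update p.1 i s' : Fin n → ℝ), t') ∈ S := by
      refine hL.continuousAt.preimage_mem_nhds (hS.mem_nhds ?_)
      show 0 < (Function.update p.1 i (p.1 i)) (lastIdx n hn)
      rw [Function.update_eq_self]
      exact hp
    have hEv : (fun s' : ℝ => partialT n f ((Function.update p.1 i s' : Fin n → ℝ), t'))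
        =ᶠ[𝓝 (p.1 i)]
        (fun _ : ℝ => -Real.sqrt (-m * lam) * Real.tanh (μ * t' + a p.1)) := by
      filter_upwards [hmem] with s' hs'
      rw [ht _ hs']
      have : a (Function.update p.1 i s') = a p.1 := haconst _ _ hs' hp
      rw [this]
    have hd : partialX n (partialT n f) i (p.1, t') = 0 := by
      unfold partialX
      rw [hEv.deriv_eq]
      exact deriv_const _ _
    rw [hd, ht _ hq] at hmix'
    have htanh : Real.tanh (μ * t' + a p.1) ≠ 0 := by
      rw [Real.tanh_eq_sinh_div_cosh]
      exact div_ne_zero (Real.sinh_ne_zero.mpr hne) (Real.cosh_pos _).ne'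
    have hfactor : (1 / m * (-Real.sqrt (-m * lam) * Real.tanh (μ * t' + a p.1))) ≠ 0 :=
      mul_ne_zero (one_div_ne_zero hm.ne')
        (mul_ne_zero (neg_ne_zero.mpr hsq.ne') htanh)
    have h0 : partialX n f i (p.1, t')
        * (1 / m * (-Real.sqrt (-m * lam) * Real.tanh (μ * t' + a p.1))) = 0 := by
      linear_combination -hmix'
    rcases mul_eq_zero.mp h0 with h | h
    · exact h
    · exact absurd h hfactor
  by_cases hc : μ * p.2 + a p.1 = 0
  · -- continuity in t at the single degenerate time
    set G := fun t' : ℝ => fderiv ℝ f (p.1, t')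
      ((Pi.single i 1 : Fin n → ℝ), (0:ℝ)) with hG_def
    have hGcont : ContinuousAt G p.2 := by
      have hfc : ContinuousOn (fderiv ℝ f) S := hf.continuousOn_fderiv_of_isOpen hS (by simp)
      have h1 : ContinuousAt (fderiv ℝ f) p := hfc.continuousAt (hS.mem_nhds hp)
      have h2 : ContinuousAt (fun t' : ℝ => ((p.1 : Fin n → ℝ), t')) p.2 :=
        (continuous_const.prodMk continuous_id).continuousAt
      exact ((ContinuousLinearMap.apply ℝ ℝ
        ((Pi.single i 1 : Fin n → ℝ), (0:ℝ))).continuous.continuousAt.comp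
        (h1.comp h2))
    have hG0 : ∀ t' ≠ p.2, G t' = 0 := by
      intro t' hne
      have hne' : μ * t' + a p.1 ≠ 0 := by
        intro h
        apply hne
        have hμt : μ * t' = μ * p.2 := by linarith
        exact mul_left_cancel₀ hμpos.ne' hμt
      have hdq : DifferentiableAt ℝ f (p.1, t') :=
        (hf.contDiffAt (hS.mem_nhds (show ((p.1, t') : (Fin n → ℝ) × ℝ) ∈ S from hp))).differentiableAt (by simp)
      have h := hPX0 t' hne'
      rwa [partialX_eq_fderiv n f i (p.1, t') hdq] at h
    have h1 : Filter.Tendsto G (𝓝[≠] p.2) (𝓝 (G p.2)) :=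
      hGcont.tendsto.mono_left nhdsWithin_le_nhds
    have h2 : Filter.Tendsto G (𝓝[≠] p.2) (𝓝 0) := by
      apply Filter.Tendsto.congr' ?_ tendsto_const_nhds
      filter_upwards [self_mem_nhdsWithin] with t' ht'
      exact (hG0 t' ht').symm
    have hGp : G p.2 = 0 := tendsto_nhds_unique h1 h2
    have hdp : DifferentiableAt ℝ f p :=
      (hf.contDiffAt (hS.mem_nhds hp)).differentiableAt (by simp)
    rw [partialX_eq_fderiv n f i p hdp]
    exact hGp
  · exact hPX0 p.2 hc
end
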